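/- arXiv:1709.07208 — 4 statements merged into one kernel-verified Lean document; each statement's English description precedes it below -/
import Mathlib

section
/- For all positive integers Δ2 and ν there exists an integer N such that for every n ≥ N, every 3-multigraph H on n vertices with maximum codegree Δ2(H) ≤ Δ2 and matching number ν(H) ≤ ν satisfies e(H) ≤ f(n,ν,Δ2). -/
/-!
Let `W₀` be the set of vertices of degree above `Δ₂ (6ν + 3)`. Extending matchings greedily
through such vertices shows `|W₀| ≤ ν`, and that a maximum matching `M` of `H - W₀` satisfies
`|W₀| + |M| ≤ ν`; by maximality every triple meets `W₀` or a vertex of `M`. If `M ≠ ∅`, fewer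
than `ν` vertices have large degree, and for large `n` counting degrees gives well below
`f(n, ν, Δ₂)` triples.

If `M = ∅`, all triples meet a set `W` of exactly `ν` vertices. Summing, over `w ∈ W`, the
codegrees of `w` with the vertices outside and inside `W` gives
`6 e(H) + D = 3 Δ₂ ν (n - ν) + 2 Δ₂ C(ν, 2)`, where the defect `D ≥ 0` collects the unsaturated
pairs and the triples meeting `W` twice. Parity arguments bound `D` from below, and these lower
bounds are exactly what `g(ν, Δ₂, s)` accounts for.
-/

/-- The function `g(ν, λ, s)` from the paper. -/
noncomputable def gfun (ν lam s : ℕ) : ℤ :=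
  if ν ≤ 2 then 0
  else if (ν % 6 = 0 ∧ lam % 2 = 1) ∨
          (ν % 6 = 2 ∧ (lam % 6 = 1 ∨ lam % 6 = 3)) ∨
          (ν % 6 = 2 ∧ lam % 6 = 5 ∧ s < ν / 2) ∨
          (ν % 6 = 4 ∧ lam % 2 = 1 ∧ s < ν / 2) then
    ⌊(lam : ℚ) / 3 * (ν.choose 2 : ℚ) - (ν : ℚ) / 6⌋
  else if (ν % 6 = 2 ∧ lam % 6 = 5 ∧ s = ν / 2) ∨
          (ν % 6 = 4 ∧ lam % 2 = 1 ∧ s = ν / 2) then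
    ⌊(lam : ℚ) / 3 * (ν.choose 2 : ℚ) - (ν : ℚ) / 6⌋ - 1
  else if (ν % 6 = 2 ∧ lam % 6 = 4 ∧ s = 0) ∨
          (ν % 6 = 5 ∧ lam % 3 = 1 ∧ s = 0) then
    ⌊(lam : ℚ) / 3 * (ν.choose 2 : ℚ)⌋ - 1
  else ⌊(lam : ℚ) / 3 * (ν.choose 2 : ℚ) - 2 * (s : ℚ) / 3⌋

/-- The function `f(n, ν, Δ₂)` from the paper. -/
noncomputable def ffun (n ν Δ : ℕ) : ℤ :=
  ⌊(ν : ℚ) * ((n : ℚ) - (ν : ℚ)) * (Δ : ℚ) / 2⌋ +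
  if Even ((n - ν) * Δ) ∨ Even ν then gfun ν Δ 0 else gfun ν Δ (ν / 2)

/-- The codegree of a pair `p` of vertices in a 3-multigraph `H`: the number of
triples of `H` (with multiplicity) containing `p`. -/
def codegPair {V : Type*} [DecidableEq V] (H : Multiset (Finset V)) (p : Finset V) : ℕ :=
  Multiset.card (H.filter fun t => p ⊆ t)

open Finset Multiset

namespace Multiset

variable {α β : Type*}

theorem countP_eq_sum_map_ite (H : Multiset β) (p : β → Prop) [DecidablePred p] :
    H.countP p = (H.map fun b => if p b then 1 else 0).sum := by
  induction H using Multiset.induction with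
  | empty => simp
  | cons b H ih => by_cases hb : p b <;> simp [hb, ih, add_comm]

theorem countP_le_countP_of_imp (H : Multiset β) {p q : β → Prop} [DecidablePred p]
    [DecidablePred q] (h : ∀ b ∈ H, p b → q b) : H.countP p ≤ H.countP q := by
  simp only [countP_eq_sum_map_ite]
  exact sum_map_le_sum_map _ _ fun b hb => by split_ifs <;> simp_all

theorem sum_countP_eq_sum_map_card_filter (S : Finset α) (H : Multiset β) (p : α → β → Prop)
    [∀ a b, Decidable (p a b)] :
    ∑ a ∈ S, H.countP (p a) = (H.map fun b => #(S.filter (p · b))).sum := by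
  simp only [countP_eq_sum_map_ite, ← sum_map_sum, Finset.sum_boole, Nat.cast_id]

theorem countP_exists_le_sum_countP (S : Finset α) (H : Multiset β) (p : α → β → Prop)
    [∀ a b, Decidable (p a b)] :
    H.countP (fun b => ∃ a ∈ S, p a b) ≤ ∑ a ∈ S, H.countP (p a) := by
  rw [sum_countP_eq_sum_map_card_filter, countP_eq_sum_map_ite]
  refine sum_map_le_sum_map _ _ fun b _ => ?_
  split_ifs with h
  · obtain ⟨a, ha, hab⟩ := h
    exact Finset.card_pos.2 ⟨a, Finset.mem_filter.2 ⟨ha, hab⟩⟩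
  · exact Nat.zero_le _

theorem sum_sum_map_ite_mem [DecidableEq α] (S : Finset α) (H : Multiset (Finset α))
    (φ : Finset α → ℕ) :
    ∑ a ∈ S, (H.map fun t => if a ∈ t then φ t else 0).sum
      = (H.map fun t => #(S ∩ t) * φ t).sum := by
  simp only [← sum_map_sum, Finset.sum_ite_mem, Finset.sum_const, smul_eq_mul]

end Multiset

section Degrees

variable {V : Type*} [DecidableEq V]

def vertexDeg (H : Multiset (Finset V)) (v : V) : ℕ := H.countP (v ∈ ·)

def IsMatching (H : Multiset (Finset V)) (M : Finset (Finset V)) : Prop :=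
  (∀ t ∈ M, t ∈ H) ∧ ∀ t ∈ M, ∀ t' ∈ M, t ≠ t' → Disjoint t t'

variable {H : Multiset (Finset V)} {lam : ℕ}

theorem codegPair_eq_countP (x y : V) :
    codegPair H {x, y} = H.countP fun t => x ∈ t ∧ y ∈ t := by
  rw [codegPair, ← countP_eq_card_filter]
  exact countP_congr rfl fun t _ => by simp [Finset.insert_subset_iff]

theorem sum_codegPair_eq (S : Finset V) (w : V) :
    ∑ u ∈ S, codegPair H {w, u} = (H.map fun t => if w ∈ t then #(S ∩ t) else 0).sum := by
  simp only [codegPair_eq_countP, sum_countP_eq_sum_map_card_filter]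
  refine congrArg Multiset.sum (map_congr rfl fun t _ => ?_)
  by_cases hw : w ∈ t <;> simp [hw, Finset.filter_mem_eq_inter]

theorem sum_codegPair_le (hcod : ∀ x y : V, x ≠ y → codegPair H {x, y} ≤ lam) {S : Finset V}
    {w : V} (hw : w ∉ S) :
    ∑ u ∈ S, codegPair H {w, u} ≤ lam * #S := by
  calc ∑ u ∈ S, codegPair H {w, u} ≤ ∑ _u ∈ S, lam :=
        Finset.sum_le_sum fun u hu => hcod w u (ne_of_mem_of_not_mem hu hw).symm
    _ = lam * #S := by rw [Finset.sum_const, smul_eq_mul, mul_comm]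

theorem two_mul_vertexDeg_le [Fintype V] (h3 : ∀ t ∈ H, #t = 3)
    (hcod : ∀ x y : V, x ≠ y → codegPair H {x, y} ≤ lam) (v : V) :
    2 * vertexDeg H v ≤ lam * (Fintype.card V - 1) := by
  calc 2 * vertexDeg H v = ∑ u ∈ {v}ᶜ, codegPair H {v, u} := by
        rw [sum_codegPair_eq, vertexDeg, countP_eq_sum_map_ite, ← sum_map_mul_left]
        refine congrArg Multiset.sum (map_congr rfl fun t ht => ?_)
        by_cases hv : v ∈ t
        · have herase : ({v}ᶜ : Finset V) ∩ t = t.erase v := by ext; simp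
          simp [hv, herase, Finset.card_erase_of_mem hv, h3 t ht]
        · simp [hv]
    _ ≤ lam * #({v}ᶜ : Finset V) := sum_codegPair_le hcod (by simp)
    _ = lam * (Fintype.card V - 1) := by rw [Finset.card_compl, Finset.card_singleton]

theorem exists_mem_disjoint_of_mul_card_lt (hcod : ∀ x y : V, x ≠ y → codegPair H {x, y} ≤ lam)
    {F : Finset V} {w : V} (hw : w ∉ F)
    (hdeg : lam * #F < vertexDeg H w) : ∃ t ∈ H, w ∈ t ∧ Disjoint t F := by
  by_contra! hmeet
  have hcover : vertexDeg H w ≤ H.countP fun t => ∃ f ∈ F, w ∈ t ∧ f ∈ t :=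
    countP_le_countP_of_imp H fun t ht hwt => by
      obtain ⟨f, hft, hfF⟩ := Finset.not_disjoint_iff.1 (hmeet t ht hwt)
      exact ⟨f, hfF, hwt, hft⟩
  have hsum := countP_exists_le_sum_countP F H fun f t => w ∈ t ∧ f ∈ t
  simp only [← codegPair_eq_countP] at hsum
  have := sum_codegPair_le hcod hw
  omega

theorem card_le_sum_vertexDeg_of_cover {C : Finset V} (hcover : ∀ t ∈ H, ∃ v ∈ C, v ∈ t) :
    Multiset.card H ≤ ∑ v ∈ C, vertexDeg H v :=
  calc Multiset.card H = H.countP fun t => ∃ v ∈ C, v ∈ t := (countP_eq_card.2 hcover).symm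
    _ ≤ _ := countP_exists_le_sum_countP C H fun v t => v ∈ t

theorem IsMatching.insert {M : Finset (Finset V)} (hM : IsMatching H M)
    {t : Finset V} (ht : t ∈ H) (hdisj : ∀ t' ∈ M, Disjoint t t') :
    IsMatching H (insert t M) := by
  refine ⟨fun s hs => ?_, fun s hs s' hs' hne => ?_⟩
  · rcases Finset.mem_insert.1 hs with rfl | hs
    exacts [ht, hM.1 s hs]
  · rcases Finset.mem_insert.1 hs with rfl | hsM <;> rcases Finset.mem_insert.1 hs' with rfl | hsM'
    exacts [absurd rfl hne, hdisj s' hsM', (hdisj s hsM).symm, hM.2 s hsM s' hsM' hne]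

end Degrees

section Greedy

variable {V : Type*} [DecidableEq V] {H : Multiset (Finset V)}

theorem card_biUnion_le_three_mul {M : Finset (Finset V)} (hM : IsMatching H M)
    (h3 : ∀ t ∈ H, #t = 3) : #(M.biUnion id) ≤ 3 * #M := by
  rw [mul_comm]
  exact Finset.card_biUnion_le_card_mul M id 3 fun t ht => (h3 t (hM.1 t ht)).le

/-- A vertex of large degree has a triple avoiding all vertices already used, since each of them
blocks at most `lam` of its triples. -/
theorem exists_isMatching_card_eq_add (h3 : ∀ t ∈ H, #t = 3) {lam : ℕ}
    (hcod : ∀ x y : V, x ≠ y → codegPair H {x, y} ≤ lam) (S : Finset V) :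
    ∀ {M₀ : Finset (Finset V)}, IsMatching H M₀ → (∀ t ∈ M₀, Disjoint t S) →
      (∀ w ∈ S, lam * (3 * (#M₀ + #S)) < vertexDeg H w) →
      ∃ M, IsMatching H M ∧ #M = #M₀ + #S := by
  induction S using Finset.induction with
  | empty => exact fun {M₀} hM₀ _ _ => ⟨M₀, hM₀, rfl⟩
  | @insert w S hwS ih =>
    intro M₀ hM₀ hM₀S hdeg
    have hwM₀ : w ∉ M₀.biUnion id := by
      simp only [Finset.mem_biUnion, id_eq, not_exists, not_and]
      exact fun t ht hwt => Finset.disjoint_left.1 (hM₀S t ht) hwt (Finset.mem_insert_self w S)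
    have hwF : w ∉ M₀.biUnion id ∪ S := by simp [hwM₀, hwS]
    have hFcard : #(M₀.biUnion id ∪ S) < 3 * (#M₀ + #(insert w S)) := by
      have := Finset.card_union_le (M₀.biUnion id) S
      have := card_biUnion_le_three_mul hM₀ h3
      rw [Finset.card_insert_of_notMem hwS]
      omega
    obtain ⟨t₀, ht₀H, hwt₀, ht₀F⟩ := exists_mem_disjoint_of_mul_card_lt hcod hwF
      ((Nat.mul_le_mul_left lam hFcard.le).trans_lt (hdeg w (Finset.mem_insert_self w S)))
    have ht₀M₀ : t₀ ∉ M₀ := fun ht₀ => hwM₀ (Finset.mem_biUnion.2 ⟨t₀, ht₀, hwt₀⟩)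
    have hM₁ : IsMatching H (insert t₀ M₀) := hM₀.insert ht₀H fun t ht =>
      Finset.disjoint_of_subset_right
        (fun x hx => Finset.mem_union_left S (Finset.mem_biUnion.2 ⟨t, ht, hx⟩)) ht₀F
    have hM₁S : ∀ t ∈ insert t₀ M₀, Disjoint t S := by
      intro t ht
      rcases Finset.mem_insert.1 ht with rfl | ht
      · exact Finset.disjoint_of_subset_right Finset.subset_union_right ht₀F
      · exact Finset.disjoint_of_subset_right (Finset.subset_insert w S) (hM₀S t ht)
    have hcard : #(insert t₀ M₀) + #S = #M₀ + #(insert w S) := by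
      rw [Finset.card_insert_of_notMem ht₀M₀, Finset.card_insert_of_notMem hwS]
      omega
    obtain ⟨M, hM, hMcard⟩ := ih hM₁ hM₁S fun w' hw' => by
      rw [hcard]
      exact hdeg w' (Finset.mem_insert_of_mem hw')
    exact ⟨M, hM, hMcard.trans hcard⟩

end Greedy

section Cover

variable {V : Type*} [DecidableEq V]

def innerCodeg (H : Multiset (Finset V)) (W : Finset V) (w : V) : ℕ :=
  ∑ u ∈ W.erase w, codegPair H {w, u}

def degMeetTwo (H : Multiset (Finset V)) (W : Finset V) (w : V) : ℕ :=
  H.countP fun t => w ∈ t ∧ #(W ∩ t) = 2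

def countMeetTwo (H : Multiset (Finset V)) (W : Finset V) : ℕ :=
  H.countP fun t => #(W ∩ t) = 2

def innerSlack (lam : ℕ) (H : Multiset (Finset V)) (W : Finset V) : ℕ :=
  ∑ w ∈ W, (lam * (#W - 1) - innerCodeg H W w)

variable {H : Multiset (Finset V)} {W : Finset V} {w : V} {lam : ℕ}

theorem innerCodeg_eq (hw : w ∈ W) :
    innerCodeg H W w = (H.map fun t => if w ∈ t then #(W ∩ t) - 1 else 0).sum := by
  rw [innerCodeg, sum_codegPair_eq]
  refine congrArg Multiset.sum (map_congr rfl fun t _ => ?_)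
  by_cases hwt : w ∈ t
  · rw [if_pos hwt, if_pos hwt, Finset.erase_inter,
      Finset.card_erase_of_mem (Finset.mem_inter.2 ⟨hw, hwt⟩)]
  · simp [hwt]

theorem innerCodeg_eq_degMeetTwo_add (h3 : ∀ t ∈ H, #t = 3) (hw : w ∈ W) :
    innerCodeg H W w
      = degMeetTwo H W w + 2 * H.countP (fun t => w ∈ t ∧ #(W ∩ t) = 3) := by
  rw [innerCodeg_eq hw, degMeetTwo, countP_eq_sum_map_ite, countP_eq_sum_map_ite,
    ← sum_map_mul_left, ← sum_map_add]
  refine congrArg Multiset.sum (map_congr rfl fun t ht => ?_)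
  by_cases hwt : w ∈ t
  · have hpos : 0 < #(W ∩ t) := Finset.card_pos.2 ⟨w, Finset.mem_inter.2 ⟨hw, hwt⟩⟩
    have hle : #(W ∩ t) ≤ #t := Finset.card_le_card Finset.inter_subset_right
    rw [h3 t ht] at hle
    simp only [hwt, true_and]
    split_ifs <;> omega
  · simp [hwt]

theorem innerCodeg_le (hcod : ∀ x y : V, x ≠ y → codegPair H {x, y} ≤ lam) (hw : w ∈ W) :
    innerCodeg H W w ≤ lam * (#W - 1) :=
  Finset.card_erase_of_mem hw ▸ sum_codegPair_le hcod (Finset.notMem_erase w W)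

theorem sum_degMeetTwo : ∑ w ∈ W, degMeetTwo H W w = 2 * countMeetTwo H W := by
  simp only [degMeetTwo]
  rw [sum_countP_eq_sum_map_card_filter, countMeetTwo, countP_eq_sum_map_ite, ← sum_map_mul_left]
  refine congrArg Multiset.sum (map_congr rfl fun t _ => ?_)
  by_cases h : #(W ∩ t) = 2 <;> simp [h, Finset.filter_mem_eq_inter]

theorem sum_innerCodeg_add_innerSlack (hcod : ∀ x y : V, x ≠ y → codegPair H {x, y} ≤ lam) :
    ∑ w ∈ W, innerCodeg H W w + innerSlack lam H W = #W * (lam * (#W - 1)) := by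
  rw [innerSlack, ← Finset.sum_add_distrib,
    Finset.sum_congr rfl fun w hw => Nat.add_sub_cancel' (innerCodeg_le hcod hw),
    Finset.sum_const, smul_eq_mul]

theorem card_le_innerSlack_add_of_odd (h3 : ∀ t ∈ H, #t = 3)
    (hcod : ∀ x y : V, x ≠ y → codegPair H {x, y} ≤ lam) (hodd : Odd (lam * (#W - 1))) :
    #W ≤ innerSlack lam H W + 2 * countMeetTwo H W := by
  rw [Nat.odd_iff] at hodd
  rw [← sum_degMeetTwo, innerSlack, ← Finset.sum_add_distrib]
  have hpos : ∀ w ∈ W, 1 ≤ lam * (#W - 1) - innerCodeg H W w + degMeetTwo H W w := by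
    intro w hw
    have := innerCodeg_eq_degMeetTwo_add h3 hw
    have := innerCodeg_le hcod hw
    omega
  simpa using Finset.card_nsmul_le_sum W _ 1 hpos

theorem innerSlack_add_eq_of_card_eq_two (h3 : ∀ t ∈ H, #t = 3)
    (hcod : ∀ x y : V, x ≠ y → codegPair H {x, y} ≤ lam) (hW : #W = 2) :
    innerSlack lam H W + 2 * countMeetTwo H W = 2 * lam := by
  have hinner : ∀ w ∈ W, innerCodeg H W w = degMeetTwo H W w := by
    intro w hw
    rw [innerCodeg_eq_degMeetTwo_add h3 hw, countP_eq_zero.2 fun t _ h => ?_, mul_zero, add_zero]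
    have := Finset.card_le_card (Finset.inter_subset_left (s₁ := W) (s₂ := t))
    omega
  have := sum_innerCodeg_add_innerSlack (W := W) hcod
  rw [Finset.sum_congr rfl hinner, sum_degMeetTwo, hW] at this
  omega

theorem sub_innerCodeg_eq_sum (hcod : ∀ x y : V, x ≠ y → codegPair H {x, y} ≤ lam)
    (hw : w ∈ W) :
    lam * (#W - 1) - innerCodeg H W w = ∑ u ∈ W.erase w, (lam - codegPair H {w, u}) := by
  rw [innerCodeg, Finset.sum_tsub_distrib _ fun u hu => hcod w u (Finset.ne_of_mem_erase hu).symm,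
    Finset.sum_const, Finset.card_erase_of_mem hw, smul_eq_mul, mul_comm]

theorem exists_sub_innerCodeg_pos (hcod : ∀ x y : V, x ≠ y → codegPair H {x, y} ≤ lam)
    (hw : w ∈ W) (hpos : 0 < lam * (#W - 1) - innerCodeg H W w) :
    ∃ u ∈ W.erase w, 0 < lam * (#W - 1) - innerCodeg H W u := by
  rw [sub_innerCodeg_eq_sum hcod hw] at hpos
  obtain ⟨u, hu, hwu⟩ := Finset.exists_ne_zero_of_sum_ne_zero hpos.ne'
  refine ⟨u, hu, ?_⟩
  rw [sub_innerCodeg_eq_sum hcod (Finset.mem_of_mem_erase hu)]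
  calc 0 < lam - codegPair H {u, w} := by rw [Finset.pair_comm]; omega
    _ ≤ _ := Finset.single_le_sum (f := fun x => lam - codegPair H {u, x})
      (fun _ _ => Nat.zero_le _) (Finset.mem_erase.2 ⟨(Finset.ne_of_mem_erase hu).symm, hw⟩)

/-- The value `2` is excluded by parity: one triple meeting `W` twice makes some `innerCodeg`
odd, and otherwise the inner slack comes from a non-saturated pair, which is seen from both
of its ends. -/
theorem innerSlack_add_ne_two (h3 : ∀ t ∈ H, #t = 3)
    (hcod : ∀ x y : V, x ≠ y → codegPair H {x, y} ≤ lam) (heven : Even (lam * (#W - 1))) :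
    innerSlack lam H W + 2 * countMeetTwo H W ≠ 2 := by
  rw [Nat.even_iff] at heven
  have hparity : ∀ w ∈ W, innerCodeg H W w % 2 = degMeetTwo H W w % 2 ∧
      innerCodeg H W w ≤ lam * (#W - 1) := fun w hw =>
    ⟨by rw [innerCodeg_eq_degMeetTwo_add h3 hw]; omega, innerCodeg_le hcod hw⟩
  intro h2
  rcases (by omega : countMeetTwo H W = 1 ∧ innerSlack lam H W = 0 ∨
      countMeetTwo H W = 0 ∧ innerSlack lam H W = 2) with ⟨h1, h0⟩ | ⟨h0, h2⟩
  · obtain ⟨w, hw, hdeg⟩ := Finset.exists_ne_zero_of_sum_ne_zero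
      (by rw [sum_degMeetTwo]; omega : ∑ w ∈ W, degMeetTwo H W w ≠ 0)
    have hle : degMeetTwo H W w ≤ countMeetTwo H W := countP_le_countP_of_imp H fun _ _ h => h.2
    have hsat := Finset.sum_eq_zero_iff.1 h0 w hw
    have := hparity w hw
    omega
  · have hdeg0 := Finset.sum_eq_zero_iff.1 (by rw [sum_degMeetTwo, h0] :
      ∑ w ∈ W, degMeetTwo H W w = 0)
    obtain ⟨w, hw, hslack⟩ := Finset.exists_ne_zero_of_sum_ne_zero (by rw [← innerSlack]; omega :
      ∑ w ∈ W, (lam * (#W - 1) - innerCodeg H W w) ≠ 0)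
    obtain ⟨u, hu, hslack_u⟩ := exists_sub_innerCodeg_pos hcod hw (Nat.pos_of_ne_zero hslack)
    have hpair := Finset.sum_le_sum_of_subset (f := fun w => lam * (#W - 1) - innerCodeg H W w)
      (Finset.insert_subset hw (Finset.singleton_subset_iff.2 (Finset.mem_of_mem_erase hu)))
    rw [Finset.sum_pair (Finset.ne_of_mem_erase hu).symm, ← innerSlack] at hpair
    have := hparity w hw
    have := hdeg0 w hw
    omega

variable [Fintype V]

def outerCodeg (H : Multiset (Finset V)) (W : Finset V) (w : V) : ℕ :=
  ∑ u ∈ Wᶜ, codegPair H {w, u}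

def outerSlack (lam : ℕ) (H : Multiset (Finset V)) (W : Finset V) : ℕ :=
  ∑ w ∈ W, (lam * (Fintype.card V - #W) - outerCodeg H W w)

theorem outerCodeg_eq :
    outerCodeg H W w = (H.map fun t => if w ∈ t then #t - #(W ∩ t) else 0).sum := by
  rw [outerCodeg, sum_codegPair_eq]
  refine congrArg Multiset.sum (map_congr rfl fun t _ => ?_)
  rw [Finset.inter_comm, ← Finset.sdiff_eq_inter_compl, Finset.card_sdiff]

theorem outerCodeg_add_innerCodeg (h3 : ∀ t ∈ H, #t = 3) (hw : w ∈ W) :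
    outerCodeg H W w + innerCodeg H W w = 2 * vertexDeg H w := by
  rw [outerCodeg_eq, innerCodeg_eq hw, ← sum_map_add, vertexDeg, countP_eq_sum_map_ite,
    ← sum_map_mul_left]
  refine congrArg Multiset.sum (map_congr rfl fun t ht => ?_)
  by_cases hwt : w ∈ t
  · have hpos : 0 < #(W ∩ t) := Finset.card_pos.2 ⟨w, Finset.mem_inter.2 ⟨hw, hwt⟩⟩
    have hle : #(W ∩ t) ≤ #t := Finset.card_le_card Finset.inter_subset_right
    simp only [if_pos hwt, h3 t ht] at hle ⊢
    omega
  · simp [hwt]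

theorem outerCodeg_le (hcod : ∀ x y : V, x ≠ y → codegPair H {x, y} ≤ lam) (hw : w ∈ W) :
    outerCodeg H W w ≤ lam * (Fintype.card V - #W) :=
  Finset.card_compl W ▸ sum_codegPair_le hcod (Finset.notMem_compl.2 hw)

theorem sum_outerCodeg_add_outerSlack (hcod : ∀ x y : V, x ≠ y → codegPair H {x, y} ≤ lam) :
    ∑ w ∈ W, outerCodeg H W w + outerSlack lam H W = #W * (lam * (Fintype.card V - #W)) := by
  rw [outerSlack, ← Finset.sum_add_distrib,
    Finset.sum_congr rfl fun w hw => Nat.add_sub_cancel' (outerCodeg_le hcod hw),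
    Finset.sum_const, smul_eq_mul]

/-- Double counting over the triples: a triple meeting `W` in `j ∈ {1, 2, 3}` vertices
contributes `3 j (3 - j) + j (j - 1) = 6 + 2 [j = 2]` to the left-hand side. -/
theorem three_mul_sum_outerCodeg_add_sum_innerCodeg (h3 : ∀ t ∈ H, #t = 3)
    (hcover : ∀ t ∈ H, ∃ w ∈ W, w ∈ t) :
    3 * ∑ w ∈ W, outerCodeg H W w + ∑ w ∈ W, innerCodeg H W w
      = 6 * Multiset.card H + 2 * countMeetTwo H W := by
  rw [Finset.sum_congr rfl fun w hw => innerCodeg_eq hw]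
  simp only [outerCodeg_eq, sum_sum_map_ite_mem]
  have hcard : 6 * Multiset.card H = (H.map fun _ => 6).sum := by simp [mul_comm]
  rw [countMeetTwo, countP_eq_sum_map_ite, ← sum_map_mul_left, ← sum_map_mul_left,
    ← sum_map_add, hcard, ← sum_map_add]
  refine congrArg Multiset.sum (map_congr rfl fun t ht => ?_)
  obtain ⟨w, hw, hwt⟩ := hcover t ht
  have hpos : 0 < #(W ∩ t) := Finset.card_pos.2 ⟨w, Finset.mem_inter.2 ⟨hw, hwt⟩⟩
  have hle : #(W ∩ t) ≤ #t := Finset.card_le_card Finset.inter_subset_right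
  rw [h3 t ht] at hle ⊢
  generalize #(W ∩ t) = j at hpos hle
  interval_cases j <;> simp

theorem six_mul_card_add_slack_eq (h3 : ∀ t ∈ H, #t = 3)
    (hcod : ∀ x y : V, x ≠ y → codegPair H {x, y} ≤ lam) (hcover : ∀ t ∈ H, ∃ w ∈ W, w ∈ t) :
    6 * Multiset.card H + (3 * outerSlack lam H W + innerSlack lam H W + 2 * countMeetTwo H W)
      = 3 * (#W * (lam * (Fintype.card V - #W))) + #W * (lam * (#W - 1)) := by
  have := sum_outerCodeg_add_outerSlack (W := W) hcod
  have := sum_innerCodeg_add_innerSlack (W := W) hcod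
  have := three_mul_sum_outerCodeg_add_sum_innerCodeg h3 hcover
  omega

theorem two_mul_card_le_slack_of_odd (h3 : ∀ t ∈ H, #t = 3)
    (hcod : ∀ x y : V, x ≠ y → codegPair H {x, y} ≤ lam)
    (hout : Odd (lam * (Fintype.card V - #W))) (hin : Even (lam * (#W - 1))) :
    2 * #W ≤ 3 * outerSlack lam H W + innerSlack lam H W + 2 * countMeetTwo H W := by
  rw [Nat.odd_iff] at hout
  rw [Nat.even_iff] at hin
  rw [← sum_degMeetTwo, innerSlack, outerSlack, Finset.mul_sum, ← Finset.sum_add_distrib,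
    ← Finset.sum_add_distrib]
  have hpos : ∀ w ∈ W, 2 ≤ 3 * (lam * (Fintype.card V - #W) - outerCodeg H W w) +
      (lam * (#W - 1) - innerCodeg H W w) + degMeetTwo H W w := by
    intro w hw
    have := outerCodeg_add_innerCodeg h3 hw
    have := innerCodeg_eq_degMeetTwo_add h3 hw
    have := outerCodeg_le hcod hw
    have := innerCodeg_le hcod hw
    omega
  simpa [mul_comm] using Finset.card_nsmul_le_sum W _ 2 hpos

end Cover

section Arithmetic

theorem two_mul_choose_two (ν : ℕ) : 2 * ν.choose 2 = ν * (ν - 1) := by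
  rw [Nat.choose_two_right, Nat.mul_div_cancel' (Nat.even_mul_pred_self ν).two_dvd]

theorem choose_two_mod_three {ν : ℕ} (h : ν % 3 = 2) : ν.choose 2 % 3 = 1 := by
  have h2 := two_mul_choose_two ν
  have hprod : ν * (ν - 1) % 3 = 2 := by rw [Nat.mul_mod, h, show (ν - 1) % 3 = 1 by omega]
  omega

theorem floor_third_mul_choose_sub_sixth (ν lam : ℕ) :
    ⌊(lam : ℚ) / 3 * (ν.choose 2 : ℚ) - (ν : ℚ) / 6⌋
      = (2 * (lam * ν.choose 2 : ℕ) - ν : ℤ) / 6 := by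
  rw [show (6 : ℤ) = ((6 : ℕ) : ℤ) from rfl, ← Rat.floor_intCast_div_natCast]
  congr 1
  push_cast
  ring

theorem floor_third_mul_choose (ν lam : ℕ) :
    ⌊(lam : ℚ) / 3 * (ν.choose 2 : ℚ)⌋ = (lam * ν.choose 2 : ℕ) / (3 : ℤ) := by
  rw [show (3 : ℤ) = ((3 : ℕ) : ℤ) from rfl, ← Rat.floor_intCast_div_natCast]
  congr 1
  push_cast
  ring

theorem floor_third_mul_choose_sub (ν lam s : ℕ) :
    ⌊(lam : ℚ) / 3 * (ν.choose 2 : ℚ) - 2 * (s : ℚ) / 3⌋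
      = ((lam * ν.choose 2 : ℕ) - 2 * s : ℤ) / 3 := by
  rw [show (3 : ℤ) = ((3 : ℕ) : ℤ) from rfl, ← Rat.floor_intCast_div_natCast]
  congr 1
  push_cast
  ring

theorem le_div_two_add_gfun {ν lam e D T s : ℕ}
    (hid : 6 * e + D = 3 * T + 2 * (lam * ν.choose 2))
    (hD_of_odd : lam % 2 = 1 → ν % 2 = 0 → ν ≤ D)
    (hD_of_odd_T : T % 2 = 1 → 2 * ν ≤ D)
    (hD_ne_two : lam % 2 = 0 ∨ ν % 2 = 1 → D ≠ 2)
    (hD_of_two : ν = 2 → 2 * lam ≤ D)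
    (hs : T % 2 = 0 ∧ s = 0 ∨ T % 2 = 1 ∧ s = ν / 2 ∧ ν % 2 = 1 ∧ lam % 2 = 1) :
    (e : ℤ) ≤ (T / 2 : ℕ) + gfun ν lam s := by
  rcases le_or_gt ν 2 with hν | hν
  · rw [gfun, if_pos hν]
    interval_cases ν <;> simp at hid <;> omega
  · have hQ : ν % 3 = 2 → lam % 3 = 1 → lam * ν.choose 2 % 3 = 1 := fun hν hl => by
      rw [Nat.mul_mod, hl, choose_two_mod_three hν]
    rw [gfun, if_neg (by omega), floor_third_mul_choose_sub_sixth, floor_third_mul_choose,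
      floor_third_mul_choose_sub]
    generalize lam * ν.choose 2 = Q at hid hQ
    split_ifs with h₁ h₂ h₃
    · have hD := hD_of_odd (by omega) (by omega)
      have hT : T % 2 = 0 := by omega
      omega
    · omega
    · have hD := hD_ne_two (by omega)
      have hQ3 := hQ (by omega) (by omega)
      have hT : T % 2 = 0 ∧ s = 0 := by omega
      omega
    · -- the negated case conditions are irrelevant here and only slow `omega` down
      clear h₁ h₂ h₃
      omega

theorem ffun_eq {n ν : ℕ} (lam : ℕ) (h : ν ≤ n) :
    ffun n ν lam = ((lam * (ν * (n - ν)) / 2 : ℕ) : ℤ) +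
      if Even (lam * (ν * (n - ν))) then gfun ν lam 0 else gfun ν lam (ν / 2) := by
  have hfloor : ⌊(ν : ℚ) * ((n : ℚ) - (ν : ℚ)) * (lam : ℚ) / 2⌋
      = ((lam * (ν * (n - ν)) / 2 : ℕ) : ℤ) := by
    rw [Int.natCast_div, ← Rat.floor_natCast_div_natCast]
    congr 1
    push_cast [Nat.cast_sub h]
    ring
  have hpar : (Even ((n - ν) * lam) ∨ Even ν) ↔ Even (lam * (ν * (n - ν))) := by
    simp only [Nat.even_mul]
    tauto
  rw [ffun, hfloor, if_congr hpar rfl rfl]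

theorem neg_sub_one_le_gfun (ν lam : ℕ) {s : ℕ} (hs : s ≤ ν) : -(ν : ℤ) - 1 ≤ gfun ν lam s := by
  rw [gfun, floor_third_mul_choose_sub_sixth, floor_third_mul_choose, floor_third_mul_choose_sub]
  split_ifs <;> omega

theorem le_two_mul_ffun {n ν : ℕ} (lam : ℕ) (h : ν ≤ n) :
    ((lam * (ν * (n - ν)) : ℕ) : ℤ) ≤ 2 * ffun n ν lam + 2 * ν + 3 := by
  have hg : -(ν : ℤ) - 1 ≤
      if Even (lam * (ν * (n - ν))) then gfun ν lam 0 else gfun ν lam (ν / 2) := by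
    split_ifs
    exacts [neg_sub_one_le_gfun ν lam (Nat.zero_le ν),
      neg_sub_one_le_gfun ν lam (Nat.div_le_self ν 2)]
  rw [ffun_eq lam h]
  omega

end Arithmetic

section Bounds

variable {V : Type*} [Fintype V] [DecidableEq V] {H : Multiset (Finset V)} {lam : ℕ}

theorem card_le_ffun_of_cover (h3 : ∀ t ∈ H, #t = 3)
    (hcod : ∀ x y : V, x ≠ y → codegPair H {x, y} ≤ lam) {W : Finset V}
    (hcover : ∀ t ∈ H, ∃ w ∈ W, w ∈ t) :
    (Multiset.card H : ℤ) ≤ ffun (Fintype.card V) #W lam := by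
  set D := 3 * outerSlack lam H W + innerSlack lam H W + 2 * countMeetTwo H W
  have hid : 6 * Multiset.card H + D
      = 3 * (lam * (#W * (Fintype.card V - #W))) + 2 * (lam * (#W).choose 2) := by
    have := six_mul_card_add_slack_eq h3 hcod hcover
    have h2Q : 2 * (lam * (#W).choose 2) = #W * (lam * (#W - 1)) := by
      rw [mul_left_comm, two_mul_choose_two]; ring
    have hT : lam * (#W * (Fintype.card V - #W)) = #W * (lam * (Fintype.card V - #W)) := by ring
    omega
  have hD_of_odd (hl : lam % 2 = 1) (hW : #W % 2 = 0) : #W ≤ D := by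
    rcases Nat.eq_zero_or_pos #W with h0 | hpos
    · omega
    · have := card_le_innerSlack_add_of_odd (W := W) h3 hcod
        (Nat.odd_mul.2 ⟨Nat.odd_iff.2 hl, Nat.odd_iff.2 (by omega)⟩)
      omega
  have hD_of_odd_T (hT : lam * (#W * (Fintype.card V - #W)) % 2 = 1) : 2 * #W ≤ D := by
    obtain ⟨hl, hW, hn⟩ := by simpa only [Nat.odd_mul] using Nat.odd_iff.2 hT
    have := two_mul_card_le_slack_of_odd h3 hcod (Nat.odd_mul.2 ⟨hl, hn⟩)
      (Nat.even_mul.2 (Or.inr (Nat.even_iff.2 (by rw [Nat.odd_iff] at hW; omega))))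
    omega
  have hD_ne_two (h : lam % 2 = 0 ∨ #W % 2 = 1) : D ≠ 2 := by
    have heven : Even (lam * (#W - 1)) := by
      rcases h with h | h
      exacts [(Nat.even_iff.2 h).mul_right _, (Nat.even_iff.2 (by omega)).mul_left _]
    have := innerSlack_add_ne_two h3 hcod heven
    omega
  have hD_of_two (h : #W = 2) : 2 * lam ≤ D := by
    have := innerSlack_add_eq_of_card_eq_two h3 hcod h
    omega
  have hbound := fun s => le_div_two_add_gfun (s := s) hid hD_of_odd hD_of_odd_T hD_ne_two hD_of_two
  rw [ffun_eq lam (Finset.card_le_univ W)]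
  split_ifs with hT
  · exact hbound 0 (Or.inl ⟨Nat.even_iff.1 hT, rfl⟩)
  · have hodd := Nat.not_even_iff_odd.1 hT
    obtain ⟨hl, hW, -⟩ := by simpa only [Nat.odd_mul] using hodd
    exact hbound _ (Or.inr ⟨Nat.odd_iff.1 hodd, rfl, Nat.odd_iff.1 hW, Nat.odd_iff.1 hl⟩)

theorem exists_isMatching_disjoint_maximal (h3 : ∀ t ∈ H, #t = 3) (W : Finset V) :
    ∃ M, IsMatching H M ∧ (∀ t ∈ M, Disjoint t W) ∧
      ∀ t ∈ H, Disjoint t W → ¬Disjoint t (M.biUnion id) := by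
  classical
  obtain ⟨M, hMmem, hMmax⟩ := Finset.exists_max_image
    (H.toFinset.powerset.filter fun M => IsMatching H M ∧ ∀ t ∈ M, Disjoint t W) Finset.card
    ⟨∅, Finset.mem_filter.2 ⟨Finset.empty_mem_powerset _, by simp [IsMatching]⟩⟩
  simp only [Finset.mem_filter, Finset.mem_powerset] at hMmem hMmax
  refine ⟨M, hMmem.2.1, hMmem.2.2, fun t ht htW htM => ?_⟩
  have htM' : t ∉ M := fun h => by
    obtain ⟨x, hx⟩ := Finset.card_pos.1 (by rw [h3 t ht]; norm_num : 0 < #t)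
    exact Finset.disjoint_left.1 htM hx (Finset.mem_biUnion.2 ⟨t, h, hx⟩)
  have hins := hMmax (insert t M) ⟨Finset.insert_subset (mem_toFinset.2 ht) hMmem.1,
    hMmem.2.1.insert ht fun t' ht' =>
      Finset.disjoint_of_subset_right (Finset.subset_biUnion_of_mem id ht') htM,
    fun t' ht' => by
      rcases Finset.mem_insert.1 ht' with rfl | ht'
      exacts [htW, hMmem.2.2 t' ht']⟩
  rw [Finset.card_insert_of_notMem htM'] at hins
  omega

/-- The threshold `lam (6ν + 3)` exceeds `lam * (3 * (#M₀ + #S))` in both greedy extensions. -/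
theorem exists_cover_of_card_isMatching_le (h3 : ∀ t ∈ H, #t = 3)
    (hcod : ∀ x y : V, x ≠ y → codegPair H {x, y} ≤ lam) {ν : ℕ}
    (hmatch : ∀ M, IsMatching H M → #M ≤ ν) :
    ∃ W M, IsMatching H M ∧ #W + #M ≤ ν ∧
      (∀ v ∈ M.biUnion id, vertexDeg H v ≤ lam * (6 * ν + 3)) ∧
      ∀ t ∈ H, ∃ v ∈ W ∪ M.biUnion id, v ∈ t := by
  classical
  set W := Finset.univ.filter fun v => lam * (6 * ν + 3) < vertexDeg H v
  obtain ⟨M, hM, hMW, hmax⟩ := exists_isMatching_disjoint_maximal h3 W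
  have hWcard : #W ≤ ν := by
    by_contra! hW
    obtain ⟨S, hSW, hS⟩ := Finset.exists_subset_card_eq (show ν + 1 ≤ #W by omega)
    obtain ⟨M', hM', hM'card⟩ := exists_isMatching_card_eq_add h3 hcod S (M₀ := ∅)
      ⟨by simp, by simp⟩ (by simp) fun w hw =>
        lt_of_le_of_lt (Nat.mul_le_mul_left lam (by rw [Finset.card_empty, hS]; omega))
          (Finset.mem_filter.1 (hSW hw)).2
    have := hmatch M' hM'
    rw [hM'card, Finset.card_empty, hS] at this
    omega
  have hWM : #M + #W ≤ ν := by
    have hMν := hmatch M hM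
    obtain ⟨M', hM', hM'card⟩ := exists_isMatching_card_eq_add h3 hcod W hM hMW fun w hw =>
      lt_of_le_of_lt (Nat.mul_le_mul_left lam (by omega)) (Finset.mem_filter.1 hw).2
    exact hM'card ▸ hmatch M' hM'
  refine ⟨W, M, hM, by omega, fun v hv => ?_, fun t ht => ?_⟩
  · obtain ⟨t, htM, hvt⟩ := Finset.mem_biUnion.1 hv
    simpa [W] using Finset.disjoint_left.1 (hMW t htM) hvt
  · by_contra! h
    exact hmax t ht (Finset.disjoint_left.2 fun x hx hxW => h x (Finset.mem_union_left _ hxW) hx)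
      (Finset.disjoint_left.2 fun x hx hxM => h x (Finset.mem_union_right _ hxM) hx)

theorem degree_bound_le_mul_mul_sub {lam ν w k n : ℕ} (hlam : 0 < lam) (hk : 0 < k)
    (hwk : w + k ≤ ν) (hn : (ν + 19) ^ 2 ≤ n) :
    w * (lam * (n - 1)) + 2 * (3 * k * (lam * (6 * ν + 3))) + 2 * ν + 3
      ≤ lam * (ν * (n - ν)) := by
  have hνn : ν ≤ n := by nlinarith
  zify [hνn, show 1 ≤ n by nlinarith] at hn hwk hk hlam ⊢
  have hw : (w : ℤ) * (n - 1) ≤ (ν - k) * (n - 1) :=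
    mul_le_mul_of_nonneg_right (by linarith) (by nlinarith)
  have hk' : 0 ≤ ((k : ℤ) - 1) * (n - 36 * ν - 19) := mul_nonneg (by linarith) (by nlinarith)
  have hB : 2 * (ν : ℤ) + 3 ≤ ν * (n - ν) - w * (n - 1) - 6 * k * (6 * ν + 3) := by nlinarith
  have hlamB := mul_le_mul_of_nonneg_left hB (by linarith : (0 : ℤ) ≤ lam - 1)
  nlinarith

theorem card_le_ffun_of_matching_cover (h3 : ∀ t ∈ H, #t = 3)
    (hcod : ∀ x y : V, x ≠ y → codegPair H {x, y} ≤ lam) (hlam : 0 < lam) {ν : ℕ}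
    {W : Finset V} {M : Finset (Finset V)} (hM : IsMatching H M) (hMne : M.Nonempty)
    (hWM : #W + #M ≤ ν) (hlow : ∀ v ∈ M.biUnion id, vertexDeg H v ≤ lam * (6 * ν + 3))
    (hcover : ∀ t ∈ H, ∃ v ∈ W ∪ M.biUnion id, v ∈ t) (hn : (ν + 19) ^ 2 ≤ Fintype.card V) :
    (Multiset.card H : ℤ) ≤ ffun (Fintype.card V) ν lam := by
  have hcount := card_le_sum_vertexDeg_of_cover hcover
  have hunion := Finset.sum_union_inter (s₁ := W) (s₂ := M.biUnion id) (f := vertexDeg H)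
  have hW : 2 * ∑ v ∈ W, vertexDeg H v ≤ #W * (lam * (Fintype.card V - 1)) := by
    rw [Finset.mul_sum, ← smul_eq_mul, ← Finset.sum_const]
    exact Finset.sum_le_sum fun v _ => two_mul_vertexDeg_le h3 hcod v
  have hV : ∑ v ∈ M.biUnion id, vertexDeg H v ≤ 3 * #M * (lam * (6 * ν + 3)) :=
    (Finset.sum_le_sum hlow).trans (by
      rw [Finset.sum_const, smul_eq_mul]
      exact Nat.mul_le_mul_right _ (card_biUnion_le_three_mul hM h3))
  have harith := degree_bound_le_mul_mul_sub hlam (Finset.card_pos.2 hMne) hWM hn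
  have hf := le_two_mul_ffun lam (show ν ≤ Fintype.card V by nlinarith)
  have : 2 * Multiset.card H + 2 * ν + 3 ≤ lam * (ν * (Fintype.card V - ν)) := by omega
  omega

end Bounds

theorem stmt_0_general (Δ₂ ν : ℕ) (hΔ : 0 < Δ₂) :
    ∃ N : ℕ, ∀ n : ℕ, N ≤ n →
      ∀ H : Multiset (Finset (Fin n)),
        (∀ t ∈ H, t.card = 3) →
        (∀ x y : Fin n, x ≠ y → codegPair H {x, y} ≤ Δ₂) →
        (∀ M : Finset (Finset (Fin n)), (∀ t ∈ M, t ∈ H) →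
          (∀ t ∈ M, ∀ t' ∈ M, t ≠ t' → Disjoint t t') → M.card ≤ ν) →
        (Multiset.card H : ℤ) ≤ ffun n ν Δ₂ := by
  refine ⟨(ν + 19) ^ 2, fun n hn H h3 hcod hmatch => ?_⟩
  obtain ⟨W, M, hM, hWM, hlow, hcover⟩ :=
    exists_cover_of_card_isMatching_le h3 hcod fun M hM => hmatch M hM.1 hM.2
  rcases M.eq_empty_or_nonempty with rfl | hMne
  · obtain ⟨W', hWW', -, hW'⟩ := Finset.exists_subsuperset_card_eq (Finset.subset_univ W)
      (by simpa using hWM) (by simp only [Finset.card_univ, Fintype.card_fin]; nlinarith)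
    have hcover' : ∀ t ∈ H, ∃ w ∈ W', w ∈ t := fun t ht => by
      obtain ⟨v, hv, hvt⟩ := hcover t ht
      exact ⟨v, hWW' (by simpa using hv), hvt⟩
    simpa [hW'] using card_le_ffun_of_cover h3 hcod hcover'
  · simpa using card_le_ffun_of_matching_cover h3 hcod hΔ hM hMne hWM hlow hcover
      (by simpa using hn)

/-- every 3-multigraph on `n` vertices (`n` large) with maximum codegree
at most `Δ₂` and matching number at most `ν` has at most `f(n, ν, Δ₂)` triples. -/
theorem stmt_0 (Δ₂ ν : ℕ) (hΔ : 0 < Δ₂) (hν : 0 < ν) :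
    ∃ N : ℕ, ∀ n : ℕ, N ≤ n →
      ∀ H : Multiset (Finset (Fin n)),
        (∀ t ∈ H, t.card = 3) →
        (∀ x y : Fin n, x ≠ y → codegPair H {x, y} ≤ Δ₂) →
        (∀ M : Finset (Finset (Fin n)), (∀ t ∈ M, t ∈ H) →
          (∀ t ∈ M, ∀ t' ∈ M, t ≠ t' → Disjoint t t') → M.card ≤ ν) →
        (Multiset.card H : ℤ) ≤ ffun n ν Δ₂ :=
  stmt_0_general Δ₂ ν hΔ
end

section
/- Let Δ2 be a positive integer. If H is a 3-multigraph on n ≥ 32 vertices with maximum codegree Δ2(H) ≤ Δ2 and matching number ν(H) = 1, then e(H) ≤ ⌊(n−1)Δ2/2⌋. -/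
lemma key_count {V : Type*} [DecidableEq V] (H : Multiset (Finset V))
    (P : Finset (Finset V)) (k : ℕ)
    (h : ∀ t ∈ H, k ≤ (P.filter (fun p => p ⊆ t)).card) :
    k * Multiset.card H ≤ ∑ p ∈ P, codegPair H p := by
  induction H using Multiset.induction with
  | empty => simp [codegPair]
  | cons t H ih =>
    have h1 := h t (Multiset.mem_cons_self t H)
    have h2 : ∀ t' ∈ H, k ≤ (P.filter (fun p => p ⊆ t')).card :=
      fun t' ht' => h t' (Multiset.mem_cons_of_mem ht')
    have hsum : ∀ p, codegPair (t ::ₘ H) p = (if p ⊆ t then 1 else 0) + codegPair H p := by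
      intro p
      simp only [codegPair, Multiset.filter_cons, Multiset.card_add]
      split <;> simp
    calc k * Multiset.card (t ::ₘ H) = k * Multiset.card H + k := by
          rw [Multiset.card_cons]; ring
      _ ≤ (∑ p ∈ P, codegPair H p) + (P.filter (fun p => p ⊆ t)).card :=
          add_le_add (ih h2) h1
      _ = (∑ p ∈ P, codegPair H p) + ∑ p ∈ P, (if p ⊆ t then 1 else 0) := by
          rw [Finset.sum_boole]; norm_num
      _ = ∑ p ∈ P, codegPair (t ::ₘ H) p := by
          rw [← Finset.sum_add_distrib]
          exact Finset.sum_congr rfl (fun p _ => by rw [hsum p, add_comm])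

/-- a 3-multigraph on `n ≥ 32` vertices with maximum codegree at most `Δ₂`
and matching number exactly `1` has at most `⌊(n-1)Δ₂/2⌋` triples. -/
theorem stmt_5 (Δ₂ n : ℕ) (hΔ : 0 < Δ₂) (hn : 32 ≤ n)
    (H : Multiset (Finset (Fin n)))
    (h3 : ∀ t ∈ H, t.card = 3)
    (hcod : ∀ x y : Fin n, x ≠ y → codegPair H {x, y} ≤ Δ₂)
    (hne : ∃ t, t ∈ H)
    (hmatch : ∀ M : Finset (Finset (Fin n)), (∀ t ∈ M, t ∈ H) →
      (∀ t ∈ M, ∀ t' ∈ M, t ≠ t' → Disjoint t t') → M.card ≤ 1) :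
    Multiset.card H ≤ (n - 1) * Δ₂ / 2 := by
  classical
  -- all triples pairwise intersect
  have hint : ∀ t ∈ H, ∀ t' ∈ H, ¬ Disjoint t t' := by
    intro t ht t' ht' hd
    by_cases he : t = t'
    · subst he
      have := h3 t ht
      rw [disjoint_self] at hd
      rw [hd] at this; simp at this
    · have hM := hmatch {t, t'} ?_ ?_
      · rw [Finset.card_insert_of_notMem (by simp [he]), Finset.card_singleton] at hM
        omega
      · intro s hs
        rcases Finset.mem_insert.mp hs with rfl | hs
        · exact ht
        · rw [Finset.mem_singleton] at hs; subst hs; exact ht'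
      · intro s hs s' hs' hne'
        rcases Finset.mem_insert.mp hs with rfl | hs
        · rcases Finset.mem_insert.mp hs' with rfl | hs'
          · exact absurd rfl hne'
          · rw [Finset.mem_singleton] at hs'; subst hs'; exact hd
        · rw [Finset.mem_singleton] at hs; subst hs
          rcases Finset.mem_insert.mp hs' with rfl | hs'
          · exact hd.symm
          · rw [Finset.mem_singleton] at hs'; subst hs'; exact absurd rfl hne'
  by_cases hcom : ∃ v : Fin n, ∀ t ∈ H, v ∈ t
  · -- star case
    obtain ⟨v, hv⟩ := hcom
    set P : Finset (Finset (Fin n)) :=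
      (Finset.univ.erase v).image (fun z => ({v, z} : Finset (Fin n))) with hPdef
    have hkey : 2 * Multiset.card H ≤ ∑ p ∈ P, codegPair H p := by
      apply key_count
      intro t ht
      have hvt := hv t ht
      have hsub : (t.erase v).image (fun z => ({v, z} : Finset (Fin n)))
          ⊆ P.filter (fun p => p ⊆ t) := by
        intro p hp
        obtain ⟨z, hz, rfl⟩ := Finset.mem_image.mp hp
        have hzv : z ≠ v := Finset.ne_of_mem_erase hz
        have hzt : z ∈ t := Finset.mem_of_mem_erase hz
        refine Finset.mem_filter.mpr ⟨?_, ?_⟩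
        · exact Finset.mem_image.mpr ⟨z, Finset.mem_erase.mpr ⟨hzv, Finset.mem_univ z⟩, rfl⟩
        · intro x hx
          rcases Finset.mem_insert.mp hx with rfl | hx
          · exact hvt
          · rw [Finset.mem_singleton] at hx; subst hx; exact hzt
      have hinj : Set.InjOn (fun z => ({v, z} : Finset (Fin n))) (t.erase v) := by
        intro a ha b hb hab
        have hav : a ≠ v := Finset.ne_of_mem_erase ha
        have : a ∈ ({v, b} : Finset (Fin n)) := by
          simp only at hab
          rw [← hab]; simp
        rcases Finset.mem_insert.mp this with rfl | h
        · exact absurd rfl hav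
        · exact Finset.mem_singleton.mp h
      have hc : ((t.erase v).image (fun z => ({v, z} : Finset (Fin n)))).card = 2 := by
        rw [Finset.card_image_of_injOn hinj, Finset.card_erase_of_mem hvt, h3 t ht]
      calc 2 = ((t.erase v).image (fun z => ({v, z} : Finset (Fin n)))).card := hc.symm
        _ ≤ (P.filter (fun p => p ⊆ t)).card := Finset.card_le_card hsub
    have hsumle : ∑ p ∈ P, codegPair H p ≤ (n - 1) * Δ₂ := by
      calc ∑ p ∈ P, codegPair H p ≤ P.card • Δ₂ := by
            apply Finset.sum_le_card_nsmul
            intro p hp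
            obtain ⟨z, hz, rfl⟩ := Finset.mem_image.mp hp
            exact hcod v z (Ne.symm (Finset.ne_of_mem_erase hz))
        _ = P.card * Δ₂ := smul_eq_mul ..
        _ ≤ (n - 1) * Δ₂ := by
            apply Nat.mul_le_mul_right
            calc P.card ≤ (Finset.univ.erase v).card := Finset.card_image_le
              _ = n - 1 := by
                  rw [Finset.card_erase_of_mem (Finset.mem_univ v)]
                  simp
    rw [Nat.le_div_iff_mul_le (by norm_num : 0 < 2)]
    omega
  · -- non-star case
    push_neg at hcom
    choose D hDmem hDnot using hcom
    obtain ⟨A, hA⟩ := hne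
    have hAcard := h3 A hA
    obtain ⟨a, ha⟩ : A.Nonempty := Finset.card_pos.mp (by omega)
    have hB : D a ∈ H := hDmem a
    have haB : a ∉ D a := hDnot a
    set P : Finset (Finset (Fin n)) :=
      (((A ×ˢ (D a)).filter (fun q => q.1 ≠ q.2)).image
        (fun q => ({q.1, q.2} : Finset (Fin n))))
      ∪ (A ∩ D a).biUnion (fun w => (D w).image (fun d => ({w, d} : Finset (Fin n))))
      with hPdef
    -- every triple contains a pair from P
    have hcover : ∀ t ∈ H, 1 ≤ (P.filter (fun p => p ⊆ t)).card := by
      intro t ht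
      rw [Nat.one_le_iff_ne_zero, ← Nat.pos_iff_ne_zero, Finset.card_pos]
      have h1 := hint t ht A hA
      have h2 := hint t ht (D a) hB
      rw [Finset.not_disjoint_iff] at h1 h2
      obtain ⟨u, hut, huA⟩ := h1
      obtain ⟨v, hvt, hvB⟩ := h2
      by_cases huv : u = v
      · subst huv
        have h3' := hint t ht (D u) (hDmem u)
        rw [Finset.not_disjoint_iff] at h3'
        obtain ⟨d, hdt, hdD⟩ := h3'
        have hdu : u ≠ d := fun h => hDnot u (h ▸ hdD)
        refine ⟨{u, d}, Finset.mem_filter.mpr ⟨?_, ?_⟩⟩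
        · apply Finset.mem_union_right
          exact Finset.mem_biUnion.mpr ⟨u, Finset.mem_inter.mpr ⟨huA, hvB⟩,
            Finset.mem_image.mpr ⟨d, hdD, rfl⟩⟩
        · intro x hx
          rcases Finset.mem_insert.mp hx with rfl | hx
          · exact hut
          · rw [Finset.mem_singleton] at hx; subst hx; exact hdt
      · refine ⟨{u, v}, Finset.mem_filter.mpr ⟨?_, ?_⟩⟩
        · apply Finset.mem_union_left
          exact Finset.mem_image.mpr ⟨(u, v),
            Finset.mem_filter.mpr ⟨Finset.mem_product.mpr ⟨huA, hvB⟩, huv⟩, rfl⟩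
        · intro x hx
          rcases Finset.mem_insert.mp hx with rfl | hx
          · exact hut
          · rw [Finset.mem_singleton] at hx; subst hx; exact hvt
    have hkey : Multiset.card H ≤ ∑ p ∈ P, codegPair H p := by
      have := key_count H P 1 hcover
      simpa using this
    -- card P ≤ 15
    have hABcard : (A ∩ D a).card ≤ 2 := by
      have hsub : A ∩ D a ⊆ A.erase a := by
        intro x hx
        rcases Finset.mem_inter.mp hx with ⟨hx1, hx2⟩
        exact Finset.mem_erase.mpr ⟨fun h => haB (h ▸ hx2), hx1⟩
      calc (A ∩ D a).card ≤ (A.erase a).card := Finset.card_le_card hsub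
        _ = 2 := by rw [Finset.card_erase_of_mem ha, hAcard]
    have hPcard : P.card ≤ 15 := by
      have c1 : (((A ×ˢ (D a)).filter (fun q => q.1 ≠ q.2)).image
          (fun q => ({q.1, q.2} : Finset (Fin n)))).card ≤ 9 := by
        calc _ ≤ ((A ×ˢ (D a)).filter (fun q => q.1 ≠ q.2)).card := Finset.card_image_le
          _ ≤ (A ×ˢ (D a)).card := Finset.card_filter_le _ _
          _ = 9 := by rw [Finset.card_product, hAcard, h3 _ hB]
      have c2 : ((A ∩ D a).biUnion (fun w => (D w).image
          (fun d => ({w, d} : Finset (Fin n))))).card ≤ 6 := by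
        calc _ ≤ ∑ w ∈ A ∩ D a, ((D w).image (fun d => ({w, d} : Finset (Fin n)))).card :=
              Finset.card_biUnion_le
          _ ≤ ∑ w ∈ A ∩ D a, 3 := by
              apply Finset.sum_le_sum
              intro w _
              calc ((D w).image _).card ≤ (D w).card := Finset.card_image_le
                _ = 3 := h3 _ (hDmem w)
          _ = (A ∩ D a).card * 3 := by rw [Finset.sum_const, smul_eq_mul]
          _ ≤ 6 := by omega
      calc P.card ≤ _ + _ := Finset.card_union_le _ _
        _ ≤ 15 := by omega
    have hsumle : ∑ p ∈ P, codegPair H p ≤ 15 * Δ₂ := by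
      calc ∑ p ∈ P, codegPair H p ≤ P.card • Δ₂ := by
            apply Finset.sum_le_card_nsmul
            intro p hp
            rcases Finset.mem_union.mp hp with hp | hp
            · obtain ⟨⟨u, v⟩, hq, rfl⟩ := Finset.mem_image.mp hp
              exact hcod u v (Finset.mem_filter.mp hq).2
            · obtain ⟨w, hw, hp⟩ := Finset.mem_biUnion.mp hp
              obtain ⟨d, hd, rfl⟩ := Finset.mem_image.mp hp
              exact hcod w d (fun h => hDnot w (h ▸ hd))
        _ = P.card * Δ₂ := smul_eq_mul ..
        _ ≤ 15 * Δ₂ := Nat.mul_le_mul_right _ hPcard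
    rw [Nat.le_div_iff_mul_le (by norm_num : 0 < 2)]
    have h31 : 31 * Δ₂ ≤ (n - 1) * Δ₂ := Nat.mul_le_mul_right _ (by omega)
    omega
end

section
/- Let ν be an even positive integer with ν ≡ 0 or 2 (mod 6). Then there exists a partial triple system PTS(ν,1) (i.e., a set of triples on ν vertices in which every pair of vertices lies in at most one triple) with exactly (C(ν,2) − ν/2)/3 triples whose leave is a perfect matching: the vertex set can be partitioned into ν/2 pairs each contained in no triple, while every other pair of vertices is contained in exactly one triple. -/
namespace Bose

variable (t : ℕ)

abbrev N (t : ℕ) := ZMod (2 * t + 1)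
abbrev W (t : ℕ) := N t × ZMod 3

instance : NeZero (2 * t + 1) := ⟨by omega⟩

def c : N t := (t : N t) + 1

lemma two_c : (2 : N t) * c t = 1 := by
  have h : ((2 * t + 1 : ℕ) : N t) = 0 := ZMod.natCast_self _
  unfold c
  push_cast at h ⊢
  linear_combination h

lemma half (x : N t) : 2 * (x * c t) = x := by
  calc 2 * (x * c t) = (2 * c t) * x := by ring
  _ = x := by rw [two_c]; ring

lemma double_inj {a b : N t} (h : 2 * a = 2 * b) : a = b := by
  have h1 : 2 * (a * c t) = 2 * (b * c t) := by
    calc 2 * (a * c t) = (2*a) * c t := by ring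
    _ = (2*b) * c t := by rw [h]
    _ = 2 * (b * c t) := by ring
  rw [half, half] at h1; exact h1

lemma apex_iff (u w z : N t) : (u + w) * c t = z ↔ u + w = 2 * z := by
  constructor
  · intro h; rw [← h, half]
  · intro h
    have : (2:N t) * ((u + w) * c t) = 2 * z := by rw [half, h]
    exact double_inj t this

lemma z3a : ∀ k : ZMod 3, ¬ (k = k + 1) := by decide
lemma z3b : ∀ k : ZMod 3, ¬ (k = k + 1 + 1) := by decide
lemma z3cases : ∀ i j : ZMod 3, i = j ∨ j = i + 1 ∨ i = j + 1 := by decide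
lemma z3all : ∀ i : ZMod 3, i = 0 ∨ i = 1 ∨ i = 2 := by decide

def T1 (x : N t) : Finset (W t) := {(x, 0), (x, 1), (x, 2)}

def T2 (x y : N t) (k : ZMod 3) : Finset (W t) := {(x, k), (y, k), ((x + y) * c t, k + 1)}

lemma memT1 (x a : N t) (i : ZMod 3) : (a, i) ∈ T1 t x ↔ a = x := by
  simp only [T1, Finset.mem_insert, Finset.mem_singleton, Prod.mk.injEq]
  constructor
  · rintro (⟨h, -⟩ | ⟨h, -⟩ | ⟨h, -⟩) <;> exact h
  · intro h
    rcases z3all i with h0 | h0 | h0 <;> subst h0 <;> simp [h]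

lemma memT2 (x y : N t) (k : ZMod 3) (a : N t) (i : ZMod 3) :
    (a, i) ∈ T2 t x y k ↔ (a = x ∧ i = k) ∨ (a = y ∧ i = k) ∨ (a = (x + y) * c t ∧ i = k + 1) := by
  simp [T2, Prod.ext_iff]

lemma T2_comm (x y : N t) (k : ZMod 3) : T2 t x y k = T2 t y x k := by
  unfold T2
  rw [add_comm y x]
  exact Finset.insert_comm _ _ _

def S : Finset (Finset (W t)) :=
  (Finset.univ.image fun x : N t => T1 t x) ∪
  ((Finset.univ.filter fun p : N t × N t × ZMod 3 => p.1 ≠ p.2.1).image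
    fun p => T2 t p.1 p.2.1 p.2.2)

lemma memS (tr : Finset (W t)) :
    tr ∈ S t ↔ (∃ u, tr = T1 t u) ∨ (∃ u w k, u ≠ w ∧ tr = T2 t u w k) := by
  simp only [S, Finset.mem_union, Finset.mem_image, Finset.mem_filter, Finset.mem_univ,
    true_and]
  constructor
  · rintro (⟨u, h⟩ | ⟨⟨u, w, k⟩, h1, h2⟩)
    · exact Or.inl ⟨u, h.symm⟩
    · exact Or.inr ⟨u, w, k, h1, h2.symm⟩
  · rintro (⟨u, h⟩ | ⟨u, w, k, h1, h2⟩)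
    · exact Or.inl ⟨u, h.symm⟩
    · exact Or.inr ⟨⟨u, w, k⟩, h1, h2.symm⟩

lemma cardT1 (x : N t) : (T1 t x).card = 3 := by
  apply Finset.card_eq_three.mpr
  exact ⟨(x,0), (x,1), (x,2), by simp [Prod.ext_iff], by simp [Prod.ext_iff]; decide, by
    simp [Prod.ext_iff]; decide, rfl⟩

lemma cardT2 (x y : N t) (k : ZMod 3) (hxy : x ≠ y) : (T2 t x y k).card = 3 := by
  apply Finset.card_eq_three.mpr
  refine ⟨(x,k), (y,k), ((x+y) * c t, k+1), ?_, ?_, ?_, rfl⟩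
  · simp [Prod.ext_iff, hxy]
  · simp only [ne_eq, Prod.mk.injEq, not_and]
    intro _ h; exact z3a k h
  · simp only [ne_eq, Prod.mk.injEq, not_and]
    intro _ h; exact z3a k h

lemma cardS (tr : Finset (W t)) (h : tr ∈ S t) : tr.card = 3 := by
  rcases (memS t tr).mp h with ⟨u, rfl⟩ | ⟨u, w, k, huw, rfl⟩
  · exact cardT1 t u
  · exact cardT2 t u w k huw

lemma key2 (a b : N t) (i : ZMod 3) (hab : a ≠ b) :
    ∃! tr, tr ∈ S t ∧ (a, i) ∈ tr ∧ (b, i) ∈ tr := by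
  refine ⟨T2 t a b i, ⟨(memS t _).mpr (Or.inr ⟨a, b, i, hab, rfl⟩),
    (memT2 t a b i a i).mpr (by tauto), (memT2 t a b i b i).mpr (by tauto)⟩, ?_⟩
  rintro tr ⟨htr, ha, hb⟩
  rcases (memS t tr).mp htr with ⟨u, rfl⟩ | ⟨u, w, k, huw, rfl⟩
  · rw [memT1] at ha hb
    exact absurd (ha.trans hb.symm) hab
  · rw [memT2] at ha hb
    rcases ha with ⟨ha1, ha2⟩ | ⟨ha1, ha2⟩ | ⟨ha1, ha2⟩ <;>
      rcases hb with ⟨hb1, hb2⟩ | ⟨hb1, hb2⟩ | ⟨hb1, hb2⟩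
    · exact absurd (ha1.trans hb1.symm) hab
    · subst ha1; subst hb1; subst ha2; rfl
    · exact absurd (ha2.symm.trans hb2) (z3a k)
    · subst ha1; subst hb1; subst ha2; exact T2_comm t b a i
    · exact absurd (ha1.trans hb1.symm) hab
    · exact absurd (ha2.symm.trans hb2) (z3a k)
    · exact absurd (hb2.symm.trans ha2) (z3a k)
    · exact absurd (hb2.symm.trans ha2) (z3a k)
    · exact absurd (ha1.trans hb1.symm) hab

lemma key1 (a b : N t) (i : ZMod 3) :
    ∃! tr, tr ∈ S t ∧ (a, i) ∈ tr ∧ (b, i + 1) ∈ tr := by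
  by_cases hba : b = a
  · subst hba
    refine ⟨T1 t b, ⟨(memS t _).mpr (Or.inl ⟨b, rfl⟩),
      (memT1 t b b i).mpr rfl, (memT1 t b b (i+1)).mpr rfl⟩, ?_⟩
    rintro tr ⟨htr, ha, hb⟩
    rcases (memS t tr).mp htr with ⟨u, rfl⟩ | ⟨u, w, k, huw, rfl⟩
    · rw [memT1] at ha; rw [ha]
    · exfalso
      rw [memT2] at ha hb
      rcases ha with ⟨ha1, ha2⟩ | ⟨ha1, ha2⟩ | ⟨ha1, ha2⟩ <;>
        rcases hb with ⟨hb1, hb2⟩ | ⟨hb1, hb2⟩ | ⟨hb1, hb2⟩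
      · exact z3a i (ha2.trans hb2.symm)
      · exact z3a i (ha2.trans hb2.symm)
      · have h2 : u + w = 2 * b := (apex_iff t u w b).mp hb1.symm
        exact huw (show u = w by linear_combination -h2 - 2 * ha1).symm.symm
      · exact z3a i (ha2.trans hb2.symm)
      · exact z3a i (ha2.trans hb2.symm)
      · have h2 : u + w = 2 * b := (apex_iff t u w b).mp hb1.symm
        exact huw (show u = w by linear_combination h2 + 2 * ha1)
      · exact z3b i (by rw [hb2]; exact ha2)
      · exact z3b i (by rw [hb2]; exact ha2)
      · exact z3a i (ha2.trans hb2.symm)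
  · have hxa : 2 * b - a ≠ a := by
      intro h
      exact hba (double_inj t (show (2:N t) * b = 2 * a by linear_combination h))
    have happ : (a + (2 * b - a)) * c t = b := (apex_iff t _ _ _).mpr (by ring)
    refine ⟨T2 t a (2 * b - a) i, ⟨(memS t _).mpr (Or.inr ⟨a, 2 * b - a, i, Ne.symm hxa, rfl⟩),
      (memT2 t _ _ _ _ _).mpr (Or.inl ⟨rfl, rfl⟩),
      (memT2 t _ _ _ _ _).mpr (Or.inr (Or.inr ⟨happ.symm, rfl⟩))⟩, ?_⟩
    rintro tr ⟨htr, ha, hb⟩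
    rcases (memS t tr).mp htr with ⟨u, rfl⟩ | ⟨u, w, k, huw, rfl⟩
    · rw [memT1] at ha hb
      exact absurd (hb.trans ha.symm) hba
    · rw [memT2] at ha hb
      rcases ha with ⟨ha1, ha2⟩ | ⟨ha1, ha2⟩ | ⟨ha1, ha2⟩ <;>
        rcases hb with ⟨hb1, hb2⟩ | ⟨hb1, hb2⟩ | ⟨hb1, hb2⟩
      · exact absurd (ha2.trans hb2.symm) (fun h => z3a i h)
      · exact absurd (ha2.trans hb2.symm) (fun h => z3a i h)
      · subst ha1; subst ha2
        have hw : w = 2 * b - a := by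
          have h2 : a + w = 2 * b := (apex_iff t a w b).mp hb1.symm
          linear_combination h2
        rw [hw]
      · exact absurd (ha2.trans hb2.symm) (fun h => z3a i h)
      · exact absurd (ha2.trans hb2.symm) (fun h => z3a i h)
      · subst ha1; subst ha2
        have hu : u = 2 * b - a := by
          have h2 : u + a = 2 * b := (apex_iff t u a b).mp hb1.symm
          linear_combination h2
        rw [hu]
        exact T2_comm t _ _ _
      · exact absurd (show i = i + 1 + 1 by rw [hb2]; exact ha2) (z3b i)
      · exact absurd (show i = i + 1 + 1 by rw [hb2]; exact ha2) (z3b i)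
      · exact absurd (ha2.trans hb2.symm) (fun h => z3a i h)

theorem sts (x y : W t) (hxy : x ≠ y) : ∃! tr, tr ∈ S t ∧ x ∈ tr ∧ y ∈ tr := by
  obtain ⟨a, i⟩ := x
  obtain ⟨b, j⟩ := y
  rcases z3cases i j with rfl | rfl | rfl
  · exact key2 t a b i (fun h => hxy (by rw [h]))
  · exact key1 t a b i
  · obtain ⟨tr, ⟨h1, h2, h3⟩, hunq⟩ := key1 t b a j
    exact ⟨tr, ⟨h1, h3, h2⟩, fun tr' ⟨h1', h2', h3'⟩ => hunq tr' ⟨h1', h3', h2'⟩⟩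

lemma cardW : Fintype.card (W t) = 6 * t + 3 := by
  simp [ZMod.card]
  ring

end Bose


namespace Skolem

variable (t : ℕ) [NeZero t]

abbrev N (t : ℕ) := ZMod (2 * t)
abbrev V (t : ℕ) := Option (N t × ZMod 3)

instance : NeZero (2 * t) := ⟨by have := NeZero.ne t; omega⟩

lemma htpos : 0 < t := Nat.pos_of_ne_zero (NeZero.ne t)

-- basic val lemmas
lemma valt : (t : N t).val = t := ZMod.val_cast_of_lt (by have := htpos t; omega)

lemma tt0 : (t : N t) + (t : N t) = 0 := by
  have : ((2 * t : ℕ) : N t) = 0 := ZMod.natCast_self _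
  push_cast at this
  linear_combination this

lemma ht0 : (t : N t) ≠ 0 := by
  intro h
  have h1 := valt t
  rw [h, ZMod.val_zero] at h1
  exact NeZero.ne t h1.symm

lemma valaddt_lt {a : N t} (h : a.val < t) : (a + t).val = a.val + t := by
  rw [ZMod.val_add, valt]
  exact Nat.mod_eq_of_lt (by omega)

lemma valaddt_ge {a : N t} (h : t ≤ a.val) : (a + t).val = a.val - t := by
  have hv : a.val < 2 * t := ZMod.val_lt a
  rw [ZMod.val_add, valt]
  rw [Nat.mod_eq_sub_mod (show 2 * t ≤ a.val + t by omega)]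
  rw [show a.val + t - 2 * t = a.val - t by omega]
  exact Nat.mod_eq_of_lt (by omega)

lemma valaa_lt {a : N t} (h : a.val < t) : (a + a).val = a.val + a.val := by
  rw [ZMod.val_add]
  exact Nat.mod_eq_of_lt (by omega)

lemma valaa_ge {a : N t} (h : t ≤ a.val) : (a + a).val = a.val + a.val - 2 * t := by
  have hv : a.val < 2 * t := ZMod.val_lt a
  rw [ZMod.val_add]
  rw [Nat.mod_eq_sub_mod (show 2 * t ≤ a.val + a.val by omega)]
  exact Nat.mod_eq_of_lt (by omega)

lemma castval (a : N t) : ((a.val : ℕ) : N t) = a := ZMod.natCast_rightInverse a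

-- the half-idempotent quasigroup maps
def σ (z : N t) : N t := if z.val < t then z + z else z + z + 1

def π (w : N t) : N t := if Even w.val then ((w.val / 2 : ℕ) : N t) else ((t + w.val / 2 : ℕ) : N t)

lemma sigma_pi (w : N t) : σ t (π t w) = w := by
  have hw : w.val < 2 * t := ZMod.val_lt w
  by_cases he : Even w.val
  · have h1 : π t w = ((w.val / 2 : ℕ) : N t) := by unfold π; rw [if_pos he]
    obtain ⟨i, hi⟩ := he
    have h2 : (π t w).val = w.val / 2 := by
      rw [h1]; exact ZMod.val_cast_of_lt (by omega)
    unfold σ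
    rw [if_pos (by rw [h2]; omega), h1, ← Nat.cast_add]
    rw [show w.val / 2 + w.val / 2 = w.val by omega, castval]
  · have ho : w.val % 2 = 1 := Nat.odd_iff.mp (Nat.not_even_iff_odd.mp he)
    have h1 : π t w = ((t + w.val / 2 : ℕ) : N t) := by unfold π; rw [if_neg he]
    have h2 : (π t w).val = t + w.val / 2 := by
      rw [h1]; exact ZMod.val_cast_of_lt (by omega)
    unfold σ
    rw [if_neg (by rw [h2]; omega), h1]
    have : ((t + w.val / 2 : ℕ) : N t) + ((t + w.val / 2 : ℕ) : N t) + 1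
        = ((2 * t + w.val : ℕ) : N t) := by
      push_cast
      have hnat2 : w.val / 2 + w.val / 2 + 1 = w.val := by omega
      have hcast : ((w.val / 2 : ℕ) : N t) + ((w.val / 2 : ℕ) : N t) + 1 = (w.val : N t) := by
        calc ((w.val / 2 : ℕ) : N t) + ((w.val / 2 : ℕ) : N t) + 1
            = ((w.val / 2 + w.val / 2 + 1 : ℕ) : N t) := by push_cast; ring
        _ = (w.val : N t) := by rw [hnat2]
      linear_combination hcast
    rw [this]
    rw [Nat.cast_add, ZMod.natCast_self, zero_add, castval]

lemma pi_sigma (z : N t) : π t (σ t z) = z := by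
  have hz : z.val < 2 * t := ZMod.val_lt z
  by_cases h : z.val < t
  · have h1 : σ t z = z + z := by unfold σ; rw [if_pos h]
    have h2 : (σ t z).val = z.val + z.val := by rw [h1]; exact valaa_lt t h
    unfold π
    rw [if_pos (by rw [h2]; exact ⟨z.val, rfl⟩)]
    rw [h2, show (z.val + z.val) / 2 = z.val by omega, castval]
  · have h1 : σ t z = z + z + 1 := by unfold σ; rw [if_neg h]
    have hval : (z + z).val = z.val + z.val - 2 * t := valaa_ge t (by omega)
    have h2 : (σ t z).val = z.val + z.val - 2 * t + 1 := by
      haveI : Fact (1 < 2 * t) := ⟨by have := htpos t; omega⟩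
      rw [h1, ZMod.val_add (z + z) 1, hval, ZMod.val_one]
      exact Nat.mod_eq_of_lt (by omega)
    unfold π
    rw [if_neg (by rw [h2]; intro ⟨i, hi⟩; omega)]
    rw [h2]
    rw [show t + (z.val + z.val - 2 * t + 1) / 2 = z.val by omega, castval]

lemma pi_eq_iff (u y : N t) : π t u = y ↔ u = σ t y := by
  constructor
  · intro h; rw [← h, sigma_pi]
  · intro h; rw [h, pi_sigma]

lemma pi_double_lt {a : N t} (h : a.val < t) : π t (a + a) = a := by
  rw [pi_eq_iff]
  unfold σ
  rw [if_pos h]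

lemma pi_double_ge {a : N t} (h : t ≤ a.val) : π t (a + a) = a + t := by
  rw [pi_eq_iff]
  unfold σ
  have hv : (a + t).val = a.val - t := valaddt_ge t h
  have hv2 := ZMod.val_lt a
  rw [if_pos (by rw [hv]; omega)]
  have : (t : N t) + t = 0 := tt0 t
  linear_combination -this

lemma sigma_lt {b : N t} (h : b.val < t) : σ t b = b + b := by unfold σ; rw [if_pos h]

lemma att (a : N t) : (a + t) + t = a := by
  have h := tt0 t
  linear_combination h

lemma z3a : ∀ k : ZMod 3, ¬ (k = k + 1) := by decide
lemma z3b : ∀ k : ZMod 3, ¬ (k = k + 1 + 1) := by decide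
lemma z3cases : ∀ i j : ZMod 3, i = j ∨ j = i + 1 ∨ i = j + 1 := by decide
lemma z3all : ∀ i : ZMod 3, i = 0 ∨ i = 1 ∨ i = 2 := by decide
lemma z3c : ∀ i : ZMod 3, i + 2 + 1 = i := by decide
lemma z3d : ∀ i k : ZMod 3, i = k + 1 → k = i + 2 := by decide

def TA (x : N t) : Finset (V t) := {some (x, 0), some (x, 1), some (x, 2)}

def TB (x : N t) (k : ZMod 3) : Finset (V t) := {none, some (x, k), some (x + t, k + 1)}

def TC (x y : N t) (k : ZMod 3) : Finset (V t) :=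
  {some (x, k), some (y, k), some (π t (x + y), k + 1)}

lemma memTA (x a : N t) (i : ZMod 3) : some (a, i) ∈ TA t x ↔ a = x := by
  simp only [TA, Finset.mem_insert, Finset.mem_singleton, Option.some.injEq, Prod.mk.injEq]
  constructor
  · rintro (⟨h, -⟩ | ⟨h, -⟩ | ⟨h, -⟩) <;> exact h
  · intro h
    rcases z3all i with h0 | h0 | h0 <;> subst h0 <;> simp [h]

lemma noneTA (x : N t) : none ∉ TA t x := by simp [TA]

lemma memTB (x : N t) (k : ZMod 3) (a : N t) (i : ZMod 3) :
    some (a, i) ∈ TB t x k ↔ (a = x ∧ i = k) ∨ (a = x + t ∧ i = k + 1) := by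
  simp [TB, Prod.ext_iff]

lemma noneTB (x : N t) (k : ZMod 3) : none ∈ TB t x k := by simp [TB]

lemma memTC (x y : N t) (k : ZMod 3) (a : N t) (i : ZMod 3) :
    some (a, i) ∈ TC t x y k ↔
      (a = x ∧ i = k) ∨ (a = y ∧ i = k) ∨ (a = π t (x + y) ∧ i = k + 1) := by
  simp [TC, Prod.ext_iff]

lemma noneTC (x y : N t) (k : ZMod 3) : none ∉ TC t x y k := by simp [TC]

lemma TC_comm (x y : N t) (k : ZMod 3) : TC t x y k = TC t y x k := by
  unfold TC
  rw [add_comm y x]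
  exact Finset.insert_comm _ _ _

def S : Finset (Finset (V t)) :=
  ((Finset.univ.filter fun x : N t => x.val < t).image fun x => TA t x) ∪
  (((Finset.univ.filter fun x : N t => t ≤ x.val) ×ˢ (Finset.univ : Finset (ZMod 3))).image
    fun p => TB t p.1 p.2) ∪
  ((Finset.univ.filter fun p : N t × N t × ZMod 3 => p.1 ≠ p.2.1).image
    fun p => TC t p.1 p.2.1 p.2.2)

lemma memS (tr : Finset (V t)) :
    tr ∈ S t ↔ (∃ x, x.val < t ∧ tr = TA t x) ∨ (∃ x k, t ≤ x.val ∧ tr = TB t x k) ∨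
      (∃ x y k, x ≠ y ∧ tr = TC t x y k) := by
  simp only [S, Finset.mem_union, Finset.mem_image, Finset.mem_filter, Finset.mem_univ,
    true_and, Finset.mem_product, and_true]
  constructor
  · rintro ((⟨x, h1, h2⟩ | ⟨⟨x, k⟩, h1, h2⟩) | ⟨⟨u, w, k⟩, h1, h2⟩)
    · exact Or.inl ⟨x, h1, h2.symm⟩
    · exact Or.inr (Or.inl ⟨x, k, h1, h2.symm⟩)
    · exact Or.inr (Or.inr ⟨u, w, k, h1, h2.symm⟩)
  · rintro (⟨x, h1, h2⟩ | ⟨x, k, h1, h2⟩ | ⟨u, w, k, h1, h2⟩)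
    · exact Or.inl (Or.inl ⟨x, h1, h2.symm⟩)
    · exact Or.inl (Or.inr ⟨⟨x, k⟩, h1, h2.symm⟩)
    · exact Or.inr ⟨⟨u, w, k⟩, h1, h2.symm⟩

lemma cardTA (x : N t) : (TA t x).card = 3 := by
  apply Finset.card_eq_three.mpr
  exact ⟨some (x,0), some (x,1), some (x,2), by simp [Prod.ext_iff], by
    simp [Prod.ext_iff]; decide, by simp [Prod.ext_iff]; decide, rfl⟩

lemma cardTB (x : N t) (k : ZMod 3) : (TB t x k).card = 3 := by
  apply Finset.card_eq_three.mpr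
  refine ⟨none, some (x, k), some (x + t, k + 1), by simp, by simp, ?_, rfl⟩
  simp only [ne_eq, Option.some.injEq, Prod.mk.injEq, not_and]
  intro _ h
  exact z3a k h

lemma cardTC (x y : N t) (k : ZMod 3) (hxy : x ≠ y) : (TC t x y k).card = 3 := by
  apply Finset.card_eq_three.mpr
  refine ⟨some (x, k), some (y, k), some (π t (x + y), k + 1), ?_, ?_, ?_, rfl⟩
  · simp [Prod.ext_iff, hxy]
  · simp only [ne_eq, Option.some.injEq, Prod.mk.injEq, not_and]
    intro _ h
    exact z3a k h
  · simp only [ne_eq, Option.some.injEq, Prod.mk.injEq, not_and]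
    intro _ h
    exact z3a k h

lemma cardS (tr : Finset (V t)) (h : tr ∈ S t) : tr.card = 3 := by
  rcases (memS t tr).mp h with ⟨x, -, rfl⟩ | ⟨x, k, -, rfl⟩ | ⟨u, w, k, huw, rfl⟩
  · exact cardTA t x
  · exact cardTB t x k
  · exact cardTC t u w k huw

lemma keyN (a : N t) (i : ZMod 3) :
    ∃! tr, tr ∈ S t ∧ (none : V t) ∈ tr ∧ some (a, i) ∈ tr := by
  by_cases h : t ≤ a.val
  · refine ⟨TB t a i, ⟨(memS t _).mpr (Or.inr (Or.inl ⟨a, i, h, rfl⟩)), noneTB t a i,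
      (memTB t a i a i).mpr (Or.inl ⟨rfl, rfl⟩)⟩, ?_⟩
    rintro tr ⟨htr, hn, hs⟩
    rcases (memS t tr).mp htr with ⟨x, hx, rfl⟩ | ⟨x, k, hx, rfl⟩ | ⟨u, w, k, huw, rfl⟩
    · exact absurd hn (noneTA t x)
    · rw [memTB] at hs
      rcases hs with ⟨rfl, rfl⟩ | ⟨ha1, ha2⟩
      · rfl
      · exfalso
        have hv := ZMod.val_lt x
        have : a.val = x.val - t := by rw [ha1]; exact valaddt_ge t hx
        omega
    · exact absurd hn (noneTC t u w k)
  · push_neg at h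
    have hval : t ≤ (a + t).val := by rw [valaddt_lt t h]; omega
    refine ⟨TB t (a + t) (i + 2), ⟨(memS t _).mpr (Or.inr (Or.inl ⟨a + t, i + 2, hval, rfl⟩)),
      noneTB t _ _, (memTB t (a + t) (i + 2) a i).mpr (Or.inr ⟨(att t a).symm, (z3c i).symm⟩)⟩, ?_⟩
    rintro tr ⟨htr, hn, hs⟩
    rcases (memS t tr).mp htr with ⟨x, hx, rfl⟩ | ⟨x, k, hx, rfl⟩ | ⟨u, w, k, huw, rfl⟩
    · exact absurd hn (noneTA t x)
    · rw [memTB] at hs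
      rcases hs with ⟨rfl, rfl⟩ | ⟨ha1, ha2⟩
      · omega
      · have hxe : x = a + t := by rw [ha1, att]
        have hke : k = i + 2 := z3d i k ha2
        rw [hxe, hke]
    · exact absurd hn (noneTC t u w k)

lemma keyC2 (a b : N t) (i : ZMod 3) (hab : a ≠ b) :
    ∃! tr, tr ∈ S t ∧ some (a, i) ∈ tr ∧ some (b, i) ∈ tr := by
  refine ⟨TC t a b i, ⟨(memS t _).mpr (Or.inr (Or.inr ⟨a, b, i, hab, rfl⟩)),
    (memTC t a b i a i).mpr (by tauto), (memTC t a b i b i).mpr (by tauto)⟩, ?_⟩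
  rintro tr ⟨htr, ha, hb⟩
  rcases (memS t tr).mp htr with ⟨x, hx, rfl⟩ | ⟨x, k, hx, rfl⟩ | ⟨u, w, k, huw, rfl⟩
  · rw [memTA] at ha hb
    exact absurd (ha.trans hb.symm) hab
  · rw [memTB] at ha hb
    rcases ha with ⟨ha1, ha2⟩ | ⟨ha1, ha2⟩ <;> rcases hb with ⟨hb1, hb2⟩ | ⟨hb1, hb2⟩
    · exact absurd (ha1.trans hb1.symm) hab
    · exact absurd (ha2.symm.trans hb2) (z3a k)
    · exact absurd (hb2.symm.trans ha2) (z3a k)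
    · exact absurd (ha1.trans hb1.symm) hab
  · rw [memTC] at ha hb
    rcases ha with ⟨ha1, ha2⟩ | ⟨ha1, ha2⟩ | ⟨ha1, ha2⟩ <;>
      rcases hb with ⟨hb1, hb2⟩ | ⟨hb1, hb2⟩ | ⟨hb1, hb2⟩
    · exact absurd (ha1.trans hb1.symm) hab
    · subst ha1; subst hb1; subst ha2; rfl
    · exact absurd (ha2.symm.trans hb2) (z3a k)
    · subst ha1; subst hb1; subst ha2; exact TC_comm t b a i
    · exact absurd (ha1.trans hb1.symm) hab
    · exact absurd (ha2.symm.trans hb2) (z3a k)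
    · exact absurd (hb2.symm.trans ha2) (z3a k)
    · exact absurd (hb2.symm.trans ha2) (z3a k)
    · exact absurd (ha1.trans hb1.symm) hab

lemma keyC1 (a b : N t) (i : ZMod 3) :
    ∃! tr, tr ∈ S t ∧ some (a, i) ∈ tr ∧ some (b, i + 1) ∈ tr := by
  by_cases hb : b = π t (a + a)
  · by_cases hlt : a.val < t
    · -- b = a, the triple is TA a
      have hba : b = a := by rw [hb, pi_double_lt t hlt]
      subst hba
      refine ⟨TA t b, ⟨(memS t _).mpr (Or.inl ⟨b, hlt, rfl⟩),
        (memTA t b b i).mpr rfl, (memTA t b b (i + 1)).mpr rfl⟩, ?_⟩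
      rintro tr ⟨htr, ha, hb'⟩
      rcases (memS t tr).mp htr with ⟨x, hx, rfl⟩ | ⟨x, k, hx, rfl⟩ | ⟨u, w, k, huw, rfl⟩
      · rw [memTA] at ha
        rw [ha]
      · exfalso
        rw [memTB] at ha hb'
        rcases ha with ⟨ha1, ha2⟩ | ⟨ha1, ha2⟩ <;>
          rcases hb' with ⟨hb1, hb2⟩ | ⟨hb1, hb2⟩
        · have : t ≤ b.val := by rw [ha1]; exact hx
          omega
        · have : t ≤ b.val := by rw [ha1]; exact hx
          omega
        · have : t ≤ b.val := by rw [hb1]; exact hx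
          omega
        · exact z3a i (ha2.trans hb2.symm)
      · exfalso
        rw [memTC] at ha hb'
        rcases ha with ⟨ha1, ha2⟩ | ⟨ha1, ha2⟩ | ⟨ha1, ha2⟩ <;>
          rcases hb' with ⟨hb1, hb2⟩ | ⟨hb1, hb2⟩ | ⟨hb1, hb2⟩
        · exact z3a i (ha2.trans hb2.symm)
        · exact z3a i (ha2.trans hb2.symm)
        · -- b = u, b apex : u + w = σ b = b + b so w = b = u
          have h2 : u + w = σ t b := by
            rw [← (pi_eq_iff t (u + w) b)]
            exact hb1.symm
          rw [sigma_lt t hlt] at h2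
          exact huw (show u = w by linear_combination -h2 - 2 * ha1)
        · exact z3a i (ha2.trans hb2.symm)
        · exact z3a i (ha2.trans hb2.symm)
        · have h2 : u + w = σ t b := by
            rw [← (pi_eq_iff t (u + w) b)]
            exact hb1.symm
          rw [sigma_lt t hlt] at h2
          exact huw (show u = w by linear_combination h2 + 2 * ha1)
        · exact z3b i (by rw [hb2]; exact ha2)
        · exact z3b i (by rw [hb2]; exact ha2)
        · exact z3a i (ha2.symm.symm.trans hb2.symm)
    · -- t ≤ a.val : b = a + t, the triple is TB a i
      push_neg at hlt
      have hba : b = a + t := by rw [hb, pi_double_ge t hlt]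
      have hbval : b.val < t := by
        have := ZMod.val_lt a
        rw [hba, valaddt_ge t hlt]
        omega
      have hsb : σ t b = a + a := by
        rw [sigma_lt t hbval, hba]
        have h := tt0 t
        linear_combination h
      refine ⟨TB t a i, ⟨(memS t _).mpr (Or.inr (Or.inl ⟨a, i, hlt, rfl⟩)),
        (memTB t a i a i).mpr (Or.inl ⟨rfl, rfl⟩),
        (memTB t a i b (i + 1)).mpr (Or.inr ⟨hba, rfl⟩)⟩, ?_⟩
      rintro tr ⟨htr, ha, hb'⟩
      rcases (memS t tr).mp htr with ⟨x, hx, rfl⟩ | ⟨x, k, hx, rfl⟩ | ⟨u, w, k, huw, rfl⟩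
      · rw [memTA] at ha
        rw [ha] at hlt
        omega
      · rw [memTB] at ha hb'
        rcases ha with ⟨ha1, ha2⟩ | ⟨ha1, ha2⟩ <;>
          rcases hb' with ⟨hb1, hb2⟩ | ⟨hb1, hb2⟩
        · exact absurd (ha2.trans hb2.symm) (z3a i)
        · subst ha1; subst ha2; rfl
        · exact absurd (show i = i + 1 + 1 by rw [hb2]; exact ha2) (z3b i)
        · have hab : a = b := ha1.trans hb1.symm
          have hteq : (t : N t) = 0 := by linear_combination -hba - hab
          exact absurd hteq (ht0 t)
      · exfalso
        rw [memTC] at ha hb'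
        rcases ha with ⟨ha1, ha2⟩ | ⟨ha1, ha2⟩ | ⟨ha1, ha2⟩ <;>
          rcases hb' with ⟨hb1, hb2⟩ | ⟨hb1, hb2⟩ | ⟨hb1, hb2⟩
        · exact z3a i (ha2.trans hb2.symm)
        · exact z3a i (ha2.trans hb2.symm)
        · have h2 : u + w = σ t b := by
            rw [← (pi_eq_iff t (u + w) b)]
            exact hb1.symm
          rw [hsb] at h2
          exact huw (show u = w by linear_combination -h2 - 2 * ha1)
        · exact z3a i (ha2.trans hb2.symm)
        · exact z3a i (ha2.trans hb2.symm)
        · have h2 : u + w = σ t b := by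
            rw [← (pi_eq_iff t (u + w) b)]
            exact hb1.symm
          rw [hsb] at h2
          exact huw (show u = w by linear_combination h2 + 2 * ha1)
        · exact z3b i (by rw [hb2]; exact ha2)
        · exact z3b i (by rw [hb2]; exact ha2)
        · exact z3a i (ha2.trans hb2.symm)
  · -- b ≠ π (a+a) : the triple is TC a (σ b - a) i
    have hb'a : σ t b - a ≠ a := by
      intro h
      apply hb
      have hσ : σ t b = a + a := by linear_combination h
      rw [← pi_sigma t b, hσ]
    have happ : π t (a + (σ t b - a)) = b := by
      rw [show a + (σ t b - a) = σ t b by ring]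
      exact pi_sigma t b
    refine ⟨TC t a (σ t b - a) i, ⟨(memS t _).mpr (Or.inr (Or.inr ⟨a, σ t b - a, i,
      Ne.symm hb'a, rfl⟩)),
      (memTC t _ _ _ _ _).mpr (Or.inl ⟨rfl, rfl⟩),
      (memTC t _ _ _ _ _).mpr (Or.inr (Or.inr ⟨happ.symm, rfl⟩))⟩, ?_⟩
    rintro tr ⟨htr, ha, hb'⟩
    rcases (memS t tr).mp htr with ⟨x, hx, rfl⟩ | ⟨x, k, hx, rfl⟩ | ⟨u, w, k, huw, rfl⟩
    · exfalso
      rw [memTA] at ha hb'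
      apply hb
      rw [hb'.trans ha.symm, pi_double_lt t (by rw [ha]; exact hx)]
    · exfalso
      rw [memTB] at ha hb'
      rcases ha with ⟨ha1, ha2⟩ | ⟨ha1, ha2⟩ <;>
        rcases hb' with ⟨hb1, hb2⟩ | ⟨hb1, hb2⟩
      · exact z3a i (ha2.trans hb2.symm)
      · apply hb
        rw [pi_double_ge t (show t ≤ a.val by rw [ha1]; exact hx)]
        rw [hb1, ha1]
      · exact z3b i (by rw [hb2]; exact ha2)
      · exact z3a i (ha2.trans hb2.symm)
    · rw [memTC] at ha hb'
      rcases ha with ⟨ha1, ha2⟩ | ⟨ha1, ha2⟩ | ⟨ha1, ha2⟩ <;>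
        rcases hb' with ⟨hb1, hb2⟩ | ⟨hb1, hb2⟩ | ⟨hb1, hb2⟩
      · exact absurd (ha2.trans hb2.symm) (z3a i)
      · exact absurd (ha2.trans hb2.symm) (z3a i)
      · subst ha1; subst ha2
        have h2 : a + w = σ t b := by
          rw [← (pi_eq_iff t (a + w) b)]
          exact hb1.symm
        have hw : w = σ t b - a := by linear_combination h2
        rw [hw]
      · exact absurd (ha2.trans hb2.symm) (z3a i)
      · exact absurd (ha2.trans hb2.symm) (z3a i)
      · subst ha1; subst ha2
        have h2 : u + a = σ t b := by
          rw [← (pi_eq_iff t (u + a) b)]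
          exact hb1.symm
        have hu : u = σ t b - a := by linear_combination h2
        rw [hu]
        exact TC_comm t _ _ _
      · exact absurd (show i = i + 1 + 1 by rw [hb2]; exact ha2) (z3b i)
      · exact absurd (show i = i + 1 + 1 by rw [hb2]; exact ha2) (z3b i)
      · exact absurd (ha2.trans hb2.symm) (z3a i)

theorem sts (x y : V t) (hxy : x ≠ y) : ∃! tr, tr ∈ S t ∧ x ∈ tr ∧ y ∈ tr := by
  match x, y with
  | none, none => exact absurd rfl hxy
  | none, some (a, i) => exact keyN t a i
  | some (a, i), none =>
    obtain ⟨tr, ⟨h1, h2, h3⟩, hunq⟩ := keyN t a i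
    exact ⟨tr, ⟨h1, h3, h2⟩, fun tr' ⟨h1', h2', h3'⟩ => hunq tr' ⟨h1', h3', h2'⟩⟩
  | some (a, i), some (b, j) =>
    rcases z3cases i j with rfl | rfl | rfl
    · exact keyC2 t a b i (fun h => hxy (by rw [h]))
    · exact keyC1 t a b i
    · obtain ⟨tr, ⟨h1, h2, h3⟩, hunq⟩ := keyC1 t b a j
      exact ⟨tr, ⟨h1, h3, h2⟩, fun tr' ⟨h1', h2', h3'⟩ => hunq tr' ⟨h1', h3', h2'⟩⟩

lemma cardV : Fintype.card (V t) = 6 * t + 1 := by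
  simp [V, ZMod.card]
  ring

end Skolem

theorem pts_of_sts {W : Type} [Fintype W] [DecidableEq W] (ν : ℕ)
    (hW : Fintype.card W = ν + 1) (S : Finset (Finset W))
    (h3 : ∀ t ∈ S, t.card = 3)
    (hu : ∀ x y : W, x ≠ y → ∃! t, t ∈ S ∧ x ∈ t ∧ y ∈ t) :
    ∃ H : Multiset (Finset (Fin ν)),
      (∀ t ∈ H, t.card = 3) ∧
      (∀ x y : Fin ν, x ≠ y → codegPair H {x, y} ≤ 1) ∧
      Multiset.card H = (ν.choose 2 - ν / 2) / 3 ∧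
      ∃ P : Finset (Finset (Fin ν)),
        P.card = ν / 2 ∧
        (∀ p ∈ P, p.card = 2) ∧
        (∀ p ∈ P, ∀ q ∈ P, p ≠ q → Disjoint p q) ∧
        (∀ v : Fin ν, ∃ p ∈ P, v ∈ p) ∧
        (∀ p ∈ P, codegPair H p = 0) ∧
        (∀ x y : Fin ν, x ≠ y → ({x, y} : Finset (Fin ν)) ∉ P →
          codegPair H {x, y} = 1) := by
  classical
  have hne : Nonempty W := by
    have : 0 < Fintype.card W := by omega
    exact Fintype.card_pos_iff.mp this
  obtain ⟨v⟩ := hne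
  have hcard' : Fintype.card {u : W // u ≠ v} = ν := by
    simp [hW]
  let e : Fin ν ≃ {u : W // u ≠ v} := (Fintype.equivFinOfCardEq hcard').symm
  let ι : Fin ν → W := fun a => (e a).val
  have hιv : ∀ a, ι a ≠ v := fun a => (e a).2
  have hιinj : Function.Injective ι := fun a b h => e.injective (Subtype.ext h)
  have hιsurj : ∀ w : W, w ≠ v → ∃ a, ι a = w := fun w hw => ⟨e.symm ⟨w, hw⟩, by simp [ι]⟩
  let pre : Finset W → Finset (Fin ν) := fun s => Finset.univ.filter (fun a => ι a ∈ s)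
  have hmem : ∀ (s : Finset W) (a : Fin ν), a ∈ pre s ↔ ι a ∈ s := by
    intro s a; simp [pre]
  have hcard_pre_not : ∀ s : Finset W, v ∉ s → (pre s).card = s.card := by
    intro s hv
    apply Finset.card_bij (fun a _ => ι a)
    · intro a ha; exact (hmem s a).mp ha
    · intro a _ b _ h; exact hιinj h
    · intro w hw
      obtain ⟨a, rfl⟩ := hιsurj w (fun h => hv (h ▸ hw))
      exact ⟨a, (hmem s a).mpr hw, rfl⟩
  have hcard_pre_mem : ∀ s : Finset W, v ∈ s → (pre s).card = s.card - 1 := by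
    intro s hv
    have h1 : (pre s).card = (s.erase v).card := by
      apply Finset.card_bij (fun a _ => ι a)
      · intro a ha; exact Finset.mem_erase.mpr ⟨hιv a, (hmem s a).mp ha⟩
      · intro a _ b _ h; exact hιinj h
      · intro w hw
        obtain ⟨hwv, hws⟩ := Finset.mem_erase.mp hw
        obtain ⟨a, rfl⟩ := hιsurj w hwv
        exact ⟨a, (hmem s a).mpr hws, rfl⟩
    rw [h1, Finset.card_erase_of_mem hv]
  set H : Multiset (Finset (Fin ν)) := (S.filter (fun t => v ∉ t)).val.map pre with hH
  set P : Finset (Finset (Fin ν)) := (S.filter (fun t => v ∈ t)).image pre with hPdef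
  have key : ∀ p : Finset (Fin ν), codegPair H p
      = ((S.filter (fun t => v ∉ t)).filter (fun t => p ⊆ pre t)).card := by
    intro p
    show Multiset.card (Multiset.filter _ (Multiset.map pre _)) = _
    rw [Multiset.filter_map, Multiset.card_map]
    rfl
  have hsub : ∀ (x y : Fin ν) (t : Finset W),
      (({x, y} : Finset (Fin ν)) ⊆ pre t) ↔ (ι x ∈ t ∧ ι y ∈ t) := by
    intro x y t
    simp [Finset.insert_subset_iff, pre]
  have hcodeg0 : ∀ x y : Fin ν, x ≠ y →
      (∃ t0, t0 ∈ S ∧ v ∈ t0 ∧ ι x ∈ t0 ∧ ι y ∈ t0) → codegPair H {x, y} = 0 := by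
    rintro x y hxy ⟨t0, ht0S, hvt0, hx0, hy0⟩
    rw [key, Finset.card_eq_zero, Finset.filter_eq_empty_iff]
    intro t ht hsubt
    rw [Finset.mem_filter] at ht
    rw [hsub] at hsubt
    obtain ⟨t1, -, huniq⟩ := hu (ι x) (ι y) (fun h => hxy (hιinj h))
    have h1 : t = t0 := (huniq t ⟨ht.1, hsubt⟩).trans (huniq t0 ⟨ht0S, hx0, hy0⟩).symm
    exact ht.2 (h1 ▸ hvt0)
  have hcodeg1 : ∀ x y : Fin ν, x ≠ y →
      (∃ t0, t0 ∈ S ∧ v ∉ t0 ∧ ι x ∈ t0 ∧ ι y ∈ t0) → codegPair H {x, y} = 1 := by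
    rintro x y hxy ⟨t0, ht0S, hvt0, hx0, hy0⟩
    rw [key]
    have hft : ((S.filter (fun t => v ∉ t)).filter
        (fun t => ({x, y} : Finset (Fin ν)) ⊆ pre t)) = {t0} := by
      ext t
      simp only [Finset.mem_filter, Finset.mem_singleton]
      constructor
      · rintro ⟨⟨htS, hvt⟩, hs⟩
        rw [hsub] at hs
        obtain ⟨t1, -, huniq⟩ := hu (ι x) (ι y) (fun h => hxy (hιinj h))
        exact (huniq t ⟨htS, hs⟩).trans (huniq t0 ⟨ht0S, hx0, hy0⟩).symm
      · rintro rfl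
        exact ⟨⟨ht0S, hvt0⟩, (hsub x y _).mpr ⟨hx0, hy0⟩⟩
    rw [hft, Finset.card_singleton]
  have hPmem : ∀ p, p ∈ P ↔ ∃ t, t ∈ S ∧ v ∈ t ∧ pre t = p := by
    intro p
    simp [hPdef, Finset.mem_image, Finset.mem_filter, and_assoc]
  have hP2 : ∀ p ∈ P, p.card = 2 := by
    intro p hp
    obtain ⟨t, htS, hvt, rfl⟩ := (hPmem p).mp hp
    rw [hcard_pre_mem t hvt, h3 t htS]
  have hcover : ∀ u : Fin ν, ∃ p ∈ P, u ∈ p := by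
    intro u
    obtain ⟨t, ⟨htS, hvt, hut⟩, -⟩ := hu v (ι u) (Ne.symm (hιv u))
    exact ⟨pre t, (hPmem _).mpr ⟨t, htS, hvt, rfl⟩, (hmem t u).mpr hut⟩
  have hdisj : ∀ p ∈ P, ∀ q ∈ P, p ≠ q → Disjoint p q := by
    intro p hp q hq hpq
    obtain ⟨t, htS, hvt, rfl⟩ := (hPmem p).mp hp
    obtain ⟨t', htS', hvt', rfl⟩ := (hPmem q).mp hq
    rw [Finset.disjoint_left]
    intro a hap haq
    obtain ⟨t1, -, huniq⟩ := hu v (ι a) (Ne.symm (hιv a))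
    have h1 : t = t' := (huniq t ⟨htS, hvt, (hmem t a).mp hap⟩).trans
      (huniq t' ⟨htS', hvt', (hmem t' a).mp haq⟩).symm
    exact hpq (by rw [h1])
  have hPcodeg0 : ∀ p ∈ P, codegPair H p = 0 := by
    intro p hp
    obtain ⟨x, y, hxy, hp2⟩ := Finset.card_eq_two.mp (hP2 p hp)
    subst hp2
    obtain ⟨t, htS, hvt, hpre⟩ := (hPmem _).mp hp
    apply hcodeg0 x y hxy
    refine ⟨t, htS, hvt, ?_, ?_⟩
    · exact (hmem t x).mp (by rw [hpre]; simp)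
    · exact (hmem t y).mp (by rw [hpre]; simp)
  have hcodegP1 : ∀ x y : Fin ν, x ≠ y → ({x, y} : Finset (Fin ν)) ∉ P →
      codegPair H {x, y} = 1 := by
    intro x y hxy hnP
    obtain ⟨t, ⟨htS, hxt, hyt⟩, -⟩ := hu (ι x) (ι y) (fun h => hxy (hιinj h))
    by_cases hvt : v ∈ t
    · exfalso
      apply hnP
      have hpt : pre t = {x, y} := by
        refine (Finset.eq_of_subset_of_card_le ((hsub x y t).mpr ⟨hxt, hyt⟩) ?_).symm
        rw [hcard_pre_mem t hvt, h3 t htS, Finset.card_pair hxy]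
      exact (hPmem _).mpr ⟨t, htS, hvt, hpt⟩
    · exact hcodeg1 x y hxy ⟨t, htS, hvt, hxt, hyt⟩
  have hle : ∀ x y : Fin ν, x ≠ y → codegPair H {x, y} ≤ 1 := by
    intro x y hxy
    obtain ⟨t, ⟨htS, hxt, hyt⟩, -⟩ := hu (ι x) (ι y) (fun h => hxy (hιinj h))
    by_cases hvt : v ∈ t
    · rw [hcodeg0 x y hxy ⟨t, htS, hvt, hxt, hyt⟩]; omega
    · rw [hcodeg1 x y hxy ⟨t, htS, hvt, hxt, hyt⟩]
  have hPbiUnion : P.biUnion id = Finset.univ := by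
    ext a
    simp only [Finset.mem_biUnion, Finset.mem_univ, iff_true, id]
    obtain ⟨p, hp, hap⟩ := hcover a
    exact ⟨p, hp, hap⟩
  have hν2 : 2 * P.card = ν := by
    have h1 : (P.biUnion id).card = ∑ p ∈ P, (id p).card :=
      Finset.card_biUnion (fun p hp q hq h => hdisj p hp q hq h)
    rw [hPbiUnion, Finset.card_univ, Fintype.card_fin] at h1
    have h2 : ∑ p ∈ P, (id p).card = ∑ _p ∈ P, 2 :=
      Finset.sum_congr rfl (fun p hp => hP2 p hp)
    rw [h2, Finset.sum_const, smul_eq_mul] at h1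
    omega
  have hPcard : P.card = ν / 2 := by omega
  have hH3 : ∀ t ∈ H, t.card = 3 := by
    intro t ht
    obtain ⟨t', ht', rfl⟩ := Multiset.mem_map.mp ht
    have h1 := Finset.mem_filter.mp (Finset.mem_val.mp ht')
    rw [hcard_pre_not t' h1.2, h3 t' h1.1]
  have hcardsum : ∀ M : Multiset (Finset (Fin ν)), (∀ t ∈ M, t.card = 3) →
      ∑ p ∈ Finset.univ.powersetCard 2, codegPair M p = 3 * Multiset.card M := by
    intro M
    induction M using Multiset.induction_on with
    | empty => intro _; simp [codegPair]
    | cons a M ih =>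
      intro hM
      have hrec := ih (fun t ht => hM t (Multiset.mem_cons_of_mem ht))
      have hca : a.card = 3 := hM a (Multiset.mem_cons_self a M)
      have hstep : ∀ p : Finset (Fin ν),
          codegPair (a ::ₘ M) p = (if p ⊆ a then 1 else 0) + codegPair M p := by
        intro p
        unfold codegPair
        rw [Multiset.filter_cons, Multiset.card_add]
        congr 1
        split <;> simp
      simp only [hstep]
      rw [Finset.sum_add_distrib, hrec]
      have hone : ∑ p ∈ Finset.univ.powersetCard 2,
          (if p ⊆ a then 1 else 0) = 3 := by
        rw [← Finset.card_filter]
        have hfe : (Finset.univ.powersetCard 2).filter (fun p => p ⊆ a)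
            = a.powersetCard 2 := by
          ext p
          simp only [Finset.mem_filter, Finset.mem_powersetCard, Finset.subset_univ,
            true_and]
          tauto
        rw [hfe, Finset.card_powersetCard, hca]
        decide
      rw [hone, Multiset.card_cons]
      ring
  have hPsub : P ⊆ Finset.univ.powersetCard 2 := by
    intro p hp
    rw [Finset.mem_powersetCard]
    exact ⟨Finset.subset_univ p, hP2 p hp⟩
  have hsum2 : ∑ p ∈ Finset.univ.powersetCard 2, codegPair H p = ν.choose 2 - ν / 2 := by
    have h1 : ∀ p ∈ Finset.univ.powersetCard 2,
        codegPair H p = if p ∈ P then 0 else 1 := by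
      intro p hp
      obtain ⟨x, y, hxy, rfl⟩ := Finset.card_eq_two.mp (Finset.mem_powersetCard.mp hp).2
      by_cases hPp : ({x, y} : Finset (Fin ν)) ∈ P
      · simp [hPp, hPcodeg0 _ hPp]
      · simp [hPp, hcodegP1 x y hxy hPp]
    rw [Finset.sum_congr rfl h1]
    rw [Finset.sum_ite, Finset.sum_const, Finset.sum_const, smul_eq_mul, smul_eq_mul,
      mul_zero, mul_one, zero_add]
    have h2 : (Finset.univ.powersetCard 2).filter (fun p => p ∈ P) = P := by
      ext p
      simp only [Finset.mem_filter]
      exact ⟨fun h => h.2, fun h => ⟨hPsub h, h⟩⟩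
    have h3' := Finset.card_filter_add_card_filter_not
      (s := Finset.univ.powersetCard 2) (p := fun p => p ∈ P)
    rw [h2] at h3'
    have h4 : (Finset.univ.powersetCard 2 : Finset (Finset (Fin ν))).card = ν.choose 2 := by
      rw [Finset.card_powersetCard, Finset.card_univ, Fintype.card_fin]
    omega
  have hcardH : Multiset.card H = (ν.choose 2 - ν / 2) / 3 := by
    have h1 := hcardsum H hH3
    omega
  exact ⟨H, hH3, hle, hcardH, P, hPcard, hP2, hdisj, hcover, hPcodeg0, hcodegP1⟩

/-- for `ν ≡ 0, 2 (mod 6)` there is a `PTS(ν, 1)` with exactly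
`(C(ν,2) − ν/2)/3` triples whose leave is a perfect matching. -/
theorem stmt_6 (ν : ℕ) (hpos : 0 < ν) (hmod : ν % 6 = 0 ∨ ν % 6 = 2) :
    ∃ H : Multiset (Finset (Fin ν)),
      (∀ t ∈ H, t.card = 3) ∧
      (∀ x y : Fin ν, x ≠ y → codegPair H {x, y} ≤ 1) ∧
      Multiset.card H = (ν.choose 2 - ν / 2) / 3 ∧
      ∃ P : Finset (Finset (Fin ν)),
        P.card = ν / 2 ∧
        (∀ p ∈ P, p.card = 2) ∧
        (∀ p ∈ P, ∀ q ∈ P, p ≠ q → Disjoint p q) ∧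
        (∀ v : Fin ν, ∃ p ∈ P, v ∈ p) ∧
        (∀ p ∈ P, codegPair H p = 0) ∧
        (∀ x y : Fin ν, x ≠ y → ({x, y} : Finset (Fin ν)) ∉ P →
          codegPair H {x, y} = 1) := by
  rcases hmod with h0 | h2
  · -- ν ≡ 0 (mod 6): delete the point ∞ from a Skolem STS(ν+1)
    set t := ν / 6 with ht
    haveI : NeZero t := ⟨by omega⟩
    exact pts_of_sts (W := Skolem.V t) ν (by rw [Skolem.cardV]; omega)
      (Skolem.S t) (Skolem.cardS t) (Skolem.sts t)
  · -- ν ≡ 2 (mod 6): delete a point from a Bose STS(ν+1)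
    set t := ν / 6 with ht
    exact pts_of_sts (W := Bose.W t) ν (by rw [Bose.cardW]; omega)
      (Bose.S t) (Bose.cardS t) (Bose.sts t)
end

section
/- Let ν ≡ 4 (mod 6) be a positive integer. Then there exists a partial triple system PTS(ν,1) with exactly (C(ν,2) − ν/2 − 1)/3 triples whose leave is K_{1,3} together with (ν−4)/2 independent edges: there are four vertices w,x,y,z and a partition of the remaining ν−4 vertices into (ν−4)/2 pairs such that the pairs {w,x}, {w,y}, {w,z} and the (ν−4)/2 partition pairs are each contained in no triple, while every other pair of vertices is contained in exactly one triple. -/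
/-!
Write `ν = 3m + 1` with `m` odd, let `G` be an abelian group of order `m` (say `ℤ/m`), and let `S`
contain exactly one of `d, -d` for every nonzero `d ∈ G`. On the points `∞` (`none`) and `(x, i)`
of `G × ℤ/3`, take the triples `{(c+d, i), (c-d, i), (-c, i+1)}` and `{∞, (d, i), (-d, i+1)}` for
`d ∈ S`, together with `{(0,0), (0,1), (0,2)}`. No triple contains a pair `{(-d, i), (d, i+1)}`
with `d ∈ S` or `{∞, (0, i)}`, and every other pair lies in some triple. There are exactly
`(C(ν,2) - ν/2 - 1)/3` triples, so three times their number plus the size of the leave is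
`C(ν,2)`, and double counting the pairs shows that no pair lies in two triples.
-/

open Finset

section Codegree

variable {V W : Type*} [DecidableEq V] [DecidableEq W]

theorem codegPair_eq_zero_iff {H : Multiset (Finset V)} {p : Finset V} :
    codegPair H p = 0 ↔ ∀ t ∈ H, ¬p ⊆ t := by
  simp [codegPair, Multiset.filter_eq_nil]

theorem codegPair_pos_iff {H : Multiset (Finset V)} {p : Finset V} :
    0 < codegPair H p ↔ ∃ t ∈ H, p ⊆ t := by
  simp [codegPair, Multiset.card_pos_iff_exists_mem]

theorem codegPair_cons (t : Finset V) (H : Multiset (Finset V)) (p : Finset V) :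
    codegPair (t ::ₘ H) p = codegPair H p + if p ⊆ t then 1 else 0 := by
  unfold codegPair
  split_ifs with h <;> simp [h]

theorem codegPair_map (f : V ↪ W) (H : Multiset (Finset V)) (p : Finset V) :
    codegPair (H.map (map f)) (p.map f) = codegPair H p := by
  simp [codegPair, Multiset.filter_map]

variable [Fintype V]

theorem sum_codegPair_powersetCard_two {H : Multiset (Finset V)} (hH : ∀ t ∈ H, #t = 3) :
    ∑ p ∈ univ.powersetCard 2, codegPair H p = 3 * Multiset.card H := by
  induction H using Multiset.induction_on with
  | empty => simp [codegPair]
  | cons t H ih =>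
    have hsub : (univ.powersetCard 2).filter (· ⊆ t) = t.powersetCard 2 := by
      ext p; simp [mem_powersetCard, and_comm]
    rw [Multiset.forall_mem_cons] at hH
    simp only [codegPair_cons, sum_add_distrib, sum_boole, hsub, card_powersetCard, hH.1,
      ih hH.2, Multiset.card_cons]
    norm_num
    ring

end Codegree

section PTS

variable {V W : Type*} [DecidableEq V] [DecidableEq W]

structure IsPTSWithLeave (H : Multiset (Finset V)) (L : Finset (Finset V)) : Prop where
  card_eq_three : ∀ t ∈ H, #t = 3
  codegPair_leave : ∀ p ∈ L, codegPair H p = 0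
  codegPair_pair : ∀ a b : V, a ≠ b → ({a, b} : Finset V) ∉ L → codegPair H {a, b} = 1

namespace IsPTSWithLeave

variable {H : Multiset (Finset V)} {L : Finset (Finset V)}

theorem codegPair_le_one (h : IsPTSWithLeave H L) {a b : V} (hab : a ≠ b) :
    codegPair H {a, b} ≤ 1 := by
  by_cases hL : ({a, b} : Finset V) ∈ L
  · simp [h.codegPair_leave _ hL]
  · simp [h.codegPair_pair a b hab hL]

theorem map (h : IsPTSWithLeave H L) (e : V ≃ W) :
    IsPTSWithLeave (H.map (Finset.map e.toEmbedding)) (L.image (Finset.map e.toEmbedding)) where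
  card_eq_three := by
    simp only [Multiset.mem_map, forall_exists_index, and_imp]
    rintro _ t ht rfl
    rw [card_map, h.card_eq_three t ht]
  codegPair_leave := by
    simp only [mem_image, forall_exists_index, and_imp]
    rintro _ p hp rfl
    rw [codegPair_map, h.codegPair_leave p hp]
  codegPair_pair a b hab hL := by
    have hpair : ({a, b} : Finset W) = ({e.symm a, e.symm b} : Finset V).map e.toEmbedding := by
      simp
    rw [hpair] at hL ⊢
    rw [codegPair_map]
    exact h.codegPair_pair _ _ (e.symm.injective.ne hab) fun hmem => hL (mem_image_of_mem _ hmem)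

end IsPTSWithLeave

variable [Fintype V] {H : Multiset (Finset V)} {L : Finset (Finset V)}

theorem sum_codegPair_sdiff (hL : ∀ p ∈ L, #p = 2) (hzero : ∀ p ∈ L, codegPair H p = 0) :
    ∑ p ∈ univ.powersetCard 2 \ L, codegPair H p = ∑ p ∈ univ.powersetCard 2, codegPair H p := by
  rw [← sum_sdiff (subset_powersetCard_univ_iff.mpr fun p hp => hL p hp), sum_eq_zero hzero, add_zero]

theorem card_powersetCard_two_sdiff (hL : ∀ p ∈ L, #p = 2) :
    #(univ.powersetCard 2 \ L) + #L = (Fintype.card V).choose 2 := by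
  rw [card_sdiff_add_card_eq_card (subset_powersetCard_univ_iff.mpr fun p hp => hL p hp), card_powersetCard, card_univ]

theorem IsPTSWithLeave.three_mul_card_add_card (h : IsPTSWithLeave H L) (hL : ∀ p ∈ L, #p = 2) :
    3 * Multiset.card H + #L = (Fintype.card V).choose 2 := by
  have hone : ∀ p ∈ univ.powersetCard 2 \ L, codegPair H p = 1 := by
    intro p hp
    obtain ⟨hp, hpL⟩ := mem_sdiff.mp hp
    obtain ⟨a, b, hab, rfl⟩ := card_eq_two.mp (mem_powersetCard.mp hp).2
    exact h.codegPair_pair a b hab hpL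
  rw [← card_powersetCard_two_sdiff hL, ← sum_codegPair_powersetCard_two h.card_eq_three,
    ← sum_codegPair_sdiff hL h.codegPair_leave, sum_congr rfl hone, sum_const, smul_eq_mul,
    mul_one]

theorem isPTSWithLeave_of_forall_exists (hH : ∀ t ∈ H, #t = 3) (hL : ∀ p ∈ L, #p = 2)
    (hcount : 3 * Multiset.card H + #L = (Fintype.card V).choose 2)
    (havoid : ∀ p ∈ L, ∀ t ∈ H, ¬p ⊆ t)
    (hcover : ∀ a b : V, a ≠ b → ({a, b} : Finset V) ∉ L → ∃ t ∈ H, {a, b} ⊆ t) :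
    IsPTSWithLeave H L := by
  have hzero : ∀ p ∈ L, codegPair H p = 0 := fun p hp => codegPair_eq_zero_iff.mpr (havoid p hp)
  have hpos : ∀ p ∈ univ.powersetCard 2 \ L, 1 ≤ codegPair H p := by
    intro p hp
    obtain ⟨hp, hpL⟩ := mem_sdiff.mp hp
    obtain ⟨a, b, hab, rfl⟩ := card_eq_two.mp (mem_powersetCard.mp hp).2
    exact codegPair_pos_iff.mpr (hcover a b hab hpL)
  have hsum : ∑ p ∈ univ.powersetCard 2 \ L, (1 : ℕ) = ∑ p ∈ univ.powersetCard 2 \ L, codegPair H p := by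
    have := card_powersetCard_two_sdiff hL
    rw [sum_codegPair_sdiff hL hzero, sum_codegPair_powersetCard_two hH, ← card_eq_sum_ones]
    omega
  refine ⟨hH, hzero, fun a b hab hab' => ?_⟩
  refine ((sum_eq_sum_iff_of_le hpos).mp hsum _ ?_).symm
  simp [mem_powersetCard, card_pair hab, hab']

end PTS

section StarMatching

variable {V W : Type*} [DecidableEq V] [DecidableEq W]

def starLeave (w x y z : V) (P : Finset (Finset V)) : Finset (Finset V) :=
  P ∪ {{w, x}, {w, y}, {w, z}}

theorem image_starLeave (e : V ≃ W) (w x y z : V) (P : Finset (Finset V)) :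
    (starLeave w x y z P).image (map e.toEmbedding) =
      starLeave (e w) (e x) (e y) (e z) (P.image (map e.toEmbedding)) := by
  simp [starLeave, image_insert]

structure IsStarMatching (w x y z : V) (P : Finset (Finset V)) : Prop where
  nodup : [w, x, y, z].Nodup
  card_eq_two : ∀ p ∈ P, #p = 2
  disjoint : ∀ p ∈ P, ∀ q ∈ P, p ≠ q → Disjoint p q
  disjoint_star : ∀ p ∈ P, Disjoint p {w, x, y, z}
  cover : ∀ v, v ∉ ({w, x, y, z} : Finset V) → ∃ p ∈ P, v ∈ p

namespace IsStarMatching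

variable {w x y z : V} {P : Finset (Finset V)}

theorem card_star (h : IsStarMatching w x y z P) : #({w, x, y, z} : Finset V) = 4 := by
  simpa using List.toFinset_card_of_nodup h.nodup

theorem distinct (h : IsStarMatching w x y z P) :
    w ≠ x ∧ w ≠ y ∧ w ≠ z ∧ x ≠ y ∧ x ≠ z ∧ y ≠ z := by
  simpa [and_assoc] using h.nodup

theorem card_eq_two_of_mem_starLeave (h : IsStarMatching w x y z P) :
    ∀ p ∈ starLeave w x y z P, #p = 2 := by
  obtain ⟨hwx, hwy, hwz, -⟩ := h.distinct
  simp only [starLeave, mem_union, mem_insert, mem_singleton]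
  rintro p (hp | rfl | rfl | rfl)
  · exact h.card_eq_two p hp
  all_goals exact card_pair ‹_›

theorem card_starLeave (h : IsStarMatching w x y z P) : #(starLeave w x y z P) = #P + 3 := by
  obtain ⟨hwx, hwy, hwz, hxy, hxz, hyz⟩ := h.distinct
  have hpair : ∀ a b, a ≠ w → a ≠ b → ({w, a} : Finset V) ≠ {w, b} := fun a b haw hab heq => by
    have : a ∈ ({w, b} : Finset V) := heq ▸ by simp
    simp [haw, hab] at this
  rw [starLeave, card_union_of_disjoint]
  · rw [card_insert_of_notMem, card_pair (hpair y z hwy.symm hyz)]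
    simp [hpair x y hwx.symm hxy, hpair x z hwx.symm hxz]
  · rw [disjoint_right]
    intro q hq hqP
    have hw : w ∈ q := by
      simp only [mem_insert, mem_singleton] at hq
      rcases hq with rfl | rfl | rfl <;> simp
    exact disjoint_left.mp (h.disjoint_star q hqP) hw (by simp)

theorem two_mul_card_add_four [Fintype V] (h : IsStarMatching w x y z P) :
    2 * #P + 4 = Fintype.card V := by
  have hunion : P.biUnion id = univ \ {w, x, y, z} := by
    ext v
    simp only [mem_biUnion, id, mem_sdiff, mem_univ, true_and]
    constructor
    · rintro ⟨p, hp, hv⟩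
      exact disjoint_left.mp (h.disjoint_star p hp) hv
    · exact h.cover v
  have hcard := card_biUnion (s := P) (t := id) h.disjoint
  simp only [id] at hcard
  rw [hunion, card_univ_sdiff, h.card_star, sum_congr rfl h.card_eq_two, sum_const,
    smul_eq_mul] at hcard
  have := card_le_univ ({w, x, y, z} : Finset V)
  rw [h.card_star] at this
  omega

theorem map (h : IsStarMatching w x y z P) (e : V ≃ W) :
    IsStarMatching (e w) (e x) (e y) (e z) (P.image (map e.toEmbedding)) where
  nodup := by simpa using h.nodup.map e.injective
  card_eq_two := by
    simp only [mem_image, forall_exists_index, and_imp]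
    rintro _ p hp rfl
    rw [card_map, h.card_eq_two p hp]
  disjoint := by
    simp only [mem_image, forall_exists_index, and_imp]
    rintro _ p hp rfl _ q hq rfl hpq
    exact (disjoint_map _).mpr (h.disjoint p hp q hq fun h => hpq (h ▸ rfl))
  disjoint_star := by
    simp only [mem_image, forall_exists_index, and_imp]
    rintro _ p hp rfl
    simpa using h.disjoint_star p hp
  cover v hv := by
    obtain ⟨p, hp, hvp⟩ := h.cover (e.symm v) (by simpa [Equiv.symm_apply_eq] using hv)
    exact ⟨p.map e.toEmbedding, mem_image_of_mem _ hp, by simpa using hvp⟩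

end IsStarMatching

end StarMatching

section HalfSystem

variable {G : Type*} [AddCommGroup G]

structure IsHalfSystem (S : Finset G) : Prop where
  zero_notMem : (0 : G) ∉ S
  mem_iff_neg_notMem : ∀ d : G, d ≠ 0 → (d ∈ S ↔ -d ∉ S)

namespace IsHalfSystem

variable {S : Finset G} {d : G}

theorem ne_zero (hS : IsHalfSystem S) (hd : d ∈ S) : d ≠ 0 :=
  fun h => hS.zero_notMem (h ▸ hd)

theorem neg_notMem (hS : IsHalfSystem S) (hd : d ∈ S) : -d ∉ S :=
  (hS.mem_iff_neg_notMem d (hS.ne_zero hd)).mp hd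

theorem mem_or_neg_mem (hS : IsHalfSystem S) (hd : d ≠ 0) : d ∈ S ∨ -d ∈ S := by
  by_contra! h
  exact h.1 ((hS.mem_iff_neg_notMem d hd).mpr h.2)

theorem add_self_ne_zero (hS : IsHalfSystem S) (hd : d ≠ 0) : d + d ≠ 0 := fun h => by
  have hneg : -d = d := neg_eq_of_add_eq_zero_right h
  have hdS : d ∈ S := (hS.mem_or_neg_mem hd).elim id fun h => by rwa [hneg] at h
  exact hS.neg_notMem hdS (by rwa [hneg])

theorem add_self_injective (hS : IsHalfSystem S) : Function.Injective fun d : G => d + d := by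
  intro a b hab
  by_contra hne
  refine hS.add_self_ne_zero (sub_ne_zero.mpr hne) ?_
  have : a + a = b + b := hab
  rw [← sub_eq_zero] at this
  rw [← this]; abel

theorem exists_add_self_eq [Finite G] (hS : IsHalfSystem S) (y : G) : ∃ h, h + h = y :=
  Finite.injective_iff_surjective.mp hS.add_self_injective y

theorem two_mul_card_add_one [Fintype G] [DecidableEq G] (hS : IsHalfSystem S) :
    2 * #S + 1 = Fintype.card G := by
  have hcompl : Sᶜ = insert 0 (S.image Neg.neg) := by
    ext d
    by_cases hd : d = 0
    · simp [hd, hS.zero_notMem]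
    · simp only [mem_compl, mem_insert, hd, mem_image, false_or]
      rw [hS.mem_iff_neg_notMem d hd, not_not]
      exact ⟨fun h => ⟨-d, h, neg_neg d⟩, fun ⟨e, he, hed⟩ => hed ▸ (neg_neg e).symm ▸ he⟩
  have hcard := card_compl S
  rw [hcompl, card_insert_of_notMem (by simpa using hS.zero_notMem),
    card_image_of_injective _ neg_injective] at hcard
  have := card_le_univ S
  omega

end IsHalfSystem

theorem exists_isHalfSystem [Fintype G] [DecidableEq G] (hG : Odd (Fintype.card G)) :
    ∃ S : Finset G, IsHalfSystem S := by
  have hneg : ∀ d : G, d ≠ 0 → -d ≠ d := by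
    intro d hd hdd
    obtain ⟨k, hk⟩ := hG
    have h := card_nsmul_eq_zero (x := d)
    rw [hk, add_nsmul, one_nsmul, mul_nsmul, two_nsmul,
      neg_eq_iff_add_eq_zero.mp hdd, nsmul_zero, zero_add] at h
    exact hd h
  let e := Fintype.equivFin G
  refine ⟨univ.filter fun d => e (-d) < e d, ?_, ?_⟩
  · simp
  · intro d hd
    have : e (-d) ≠ e d := e.injective.ne (hneg d hd)
    simp only [mem_filter, mem_univ, true_and, neg_neg]
    omega

end HalfSystem

theorem ZMod.three_cases (i : ZMod 3) : i = 0 ∨ i = 1 ∨ i = 2 := by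
  revert i; decide

namespace PTSConstruction

variable {G : Type*} [AddCommGroup G] [DecidableEq G]

abbrev Point (G : Type*) := Option (G × ZMod 3)

def diffTriple (c d : G) (i : ZMod 3) : Finset (Point G) :=
  {some (c + d, i), some (c - d, i), some (-c, i + 1)}

def infTriple (d : G) (i : ZMod 3) : Finset (Point G) :=
  {none, some (d, i), some (-d, i + 1)}

def zeroTriple : Finset (Point G) :=
  {some (0, 0), some (0, 1), some (0, 2)}

def leavePair (d : G) (i : ZMod 3) : Finset (Point G) :=
  {some (-d, i), some (d, i + 1)}

theorem some_zero_mem_zeroTriple (i : ZMod 3) : some (0, i) ∈ (zeroTriple : Finset (Point G)) := by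
  obtain rfl | rfl | rfl := ZMod.three_cases i <;> simp [zeroTriple]

theorem diffTriple_neg (c d : G) (i : ZMod 3) : diffTriple c (-d) i = diffTriple c d i := by
  rw [diffTriple, diffTriple, sub_neg_eq_add, ← sub_eq_add_neg, insert_comm]

variable {S : Finset G}

variable (S) in
def matching : Finset (Finset (Point G)) :=
  (S ×ˢ univ).image fun t => leavePair t.1 t.2

theorem mem_matching {p : Finset (Point G)} : p ∈ matching S ↔ ∃ d ∈ S, ∃ i, leavePair d i = p := by
  simp [matching]

theorem isStarMatching (hS : IsHalfSystem S) :
    IsStarMatching none (some (0, 0)) (some (0, 1)) (some (0, 2)) (matching S) where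
  nodup := by simp; decide
  card_eq_two := by
    simp only [mem_matching, forall_exists_index, and_imp]
    rintro _ d - i rfl
    exact card_pair (by simp)
  disjoint := by
    simp only [mem_matching, forall_exists_index, and_imp]
    rintro _ d hd i rfl _ d' hd' i' rfl hne
    have := hS.neg_notMem hd
    have := hS.neg_notMem hd'
    refine disjoint_left.mpr fun v hv hv' => hne ?_
    simp [leavePair] at hv hv'
    grind
  disjoint_star := by
    simp only [mem_matching, forall_exists_index, and_imp]
    rintro _ d hd i rfl
    have := hS.ne_zero hd
    simp [leavePair, this, this.symm]
  cover := by
    rintro (_ | ⟨u, l⟩) hv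
    · simp at hv
    · have hu : u ≠ 0 := by
        rintro rfl
        obtain rfl | rfl | rfl := ZMod.three_cases l
        all_goals simp at hv
      rcases hS.mem_or_neg_mem hu with h | h
      · exact ⟨leavePair u (l - 1), mem_matching.mpr ⟨u, h, l - 1, rfl⟩, by simp [leavePair]⟩
      · exact ⟨leavePair (-u) l, mem_matching.mpr ⟨-u, h, l, rfl⟩, by simp [leavePair]⟩

variable [Fintype G]

variable (S) in
def triples : Multiset (Finset (Point G)) :=
  (univ ×ˢ S ×ˢ univ).val.map (fun t => diffTriple t.1 t.2.1 t.2.2) +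
    (S ×ˢ univ).val.map (fun t => infTriple t.1 t.2) + {zeroTriple}

theorem mem_triples {t : Finset (Point G)} :
    t ∈ triples S ↔
      (∃ c, ∃ d ∈ S, ∃ i, diffTriple c d i = t) ∨ (∃ d ∈ S, ∃ i, infTriple d i = t) ∨ t = zeroTriple := by
  simp [triples, or_assoc]

theorem card_triples : Multiset.card (triples S) = Fintype.card G * (#S * 3) + #S * 3 + 1 := by
  simp [triples]

theorem diffTriple_mem_triples (hS : IsHalfSystem S) (c : G) {d : G} (hd : d ≠ 0) (i : ZMod 3) :
    diffTriple c d i ∈ triples S := by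
  rcases hS.mem_or_neg_mem hd with h | h
  · exact mem_triples.mpr (Or.inl ⟨c, d, h, i, rfl⟩)
  · exact mem_triples.mpr (Or.inl ⟨c, -d, h, i, diffTriple_neg c d i⟩)

theorem infTriple_mem_triples {d : G} (hd : d ∈ S) (i : ZMod 3) : infTriple d i ∈ triples S :=
  mem_triples.mpr (Or.inr (Or.inl ⟨d, hd, i, rfl⟩))

theorem zeroTriple_mem_triples : zeroTriple ∈ triples S :=
  mem_triples.mpr (Or.inr (Or.inr rfl))

theorem card_eq_three_of_mem_triples (hS : IsHalfSystem S) : ∀ t ∈ triples S, #t = 3 := by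
  intro t ht
  rcases mem_triples.mp ht with ⟨c, d, hd, i, rfl⟩ | ⟨d, hd, i, rfl⟩ | rfl
  · have := hS.add_self_ne_zero (hS.ne_zero hd)
    refine card_eq_three.mpr ⟨_, _, _, ?_, ?_, ?_, rfl⟩ <;> simp
    grind
  · refine card_eq_three.mpr ⟨_, _, _, ?_, ?_, ?_, rfl⟩ <;> simp
  · refine card_eq_three.mpr ⟨_, _, _, ?_, ?_, ?_, rfl⟩ <;> simp
    all_goals decide

theorem not_subset_of_mem_starLeave (hS : IsHalfSystem S) :
    ∀ p ∈ starLeave none (some (0, 0)) (some (0, 1)) (some (0, 2)) (matching S),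
      ∀ t ∈ triples S, ¬p ⊆ t := by
  intro p hp t ht hpt
  simp only [starLeave, mem_union, mem_insert, mem_singleton] at hp
  rcases hp with hp | rfl | rfl | rfl
  · obtain ⟨d, hd, i, rfl⟩ := mem_matching.mp hp
    have := hS.ne_zero hd
    have := hS.neg_notMem hd
    rcases mem_triples.mp ht with ⟨c, d', hd', j, rfl⟩ | ⟨d', hd', j, rfl⟩ | rfl
    · have := hS.ne_zero hd'
      simp [leavePair, diffTriple, insert_subset_iff] at hpt
      grind
    · simp [leavePair, infTriple, insert_subset_iff] at hpt
      grind
    · simp [leavePair, zeroTriple, insert_subset_iff] at hpt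
      grind
  all_goals
    rcases mem_triples.mp ht with ⟨c, d', hd', j, rfl⟩ | ⟨d', hd', j, rfl⟩ | rfl
    · simp [diffTriple, insert_subset_iff] at hpt
    · have := hS.ne_zero hd'
      simp [infTriple, insert_subset_iff] at hpt
      grind
    · simp [zeroTriple, insert_subset_iff] at hpt

theorem exists_triple_infty (hS : IsHalfSystem S) {x : G} (hx : x ≠ 0) (i : ZMod 3) :
    ∃ t ∈ triples S, {none, some (x, i)} ⊆ t := by
  rcases hS.mem_or_neg_mem hx with h | h
  · exact ⟨infTriple x i, infTriple_mem_triples h i, by simp [infTriple, insert_subset_iff]⟩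
  · exact ⟨infTriple (-x) (i - 1), infTriple_mem_triples h _, by simp [infTriple, insert_subset_iff]⟩

theorem exists_triple_same_level (hS : IsHalfSystem S) {x y : G} (hxy : x ≠ y) (i : ZMod 3) :
    ∃ t ∈ triples S, {some (x, i), some (y, i)} ⊆ t := by
  obtain ⟨h, hh⟩ := hS.exists_add_self_eq (x - y)
  have h0 : h ≠ 0 := by
    rintro rfl
    exact hxy (sub_eq_zero.mp (by simpa using hh.symm))
  refine ⟨diffTriple (x - h) h i, diffTriple_mem_triples hS _ h0 i, ?_⟩
  have hy : x - h - h = y := by rw [sub_sub, hh, sub_sub_cancel]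
  simp [diffTriple, insert_subset_iff, hy]

theorem exists_triple_cross_level (hS : IsHalfSystem S) (x z : G) (i : ZMod 3)
    (hmatch : {some (x, i), some (z, i + 1)} ∉ matching S) :
    ∃ t ∈ triples S, {some (x, i), some (z, i + 1)} ⊆ t := by
  by_cases hxz : x + z = 0
  · obtain rfl : z = -x := eq_neg_of_add_eq_zero_right hxz
    by_cases hx : x = 0
    · subst hx
      refine ⟨zeroTriple, zeroTriple_mem_triples, ?_⟩
      simpa [insert_subset_iff] using ⟨some_zero_mem_zeroTriple i, some_zero_mem_zeroTriple (i + 1)⟩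
    rcases hS.mem_or_neg_mem hx with h | h
    · exact ⟨infTriple x i, infTriple_mem_triples h i, by simp [infTriple]⟩
    · exact absurd (mem_matching.mpr ⟨-x, h, i, by simp [leavePair]⟩) hmatch
  · refine ⟨diffTriple (-z) (x + z) i, diffTriple_mem_triples hS _ hxz i, ?_⟩
    simp [diffTriple, insert_subset_iff]

theorem exists_triple_of_notMem_starLeave (hS : IsHalfSystem S) (a b : Point G) (hab : a ≠ b)
    (hL : {a, b} ∉ starLeave none (some (0, 0)) (some (0, 1)) (some (0, 2)) (matching S)) :
    ∃ t ∈ triples S, {a, b} ⊆ t := by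
  have hstar : ∀ i, {none, some (0, i)} ∈
      starLeave none (some (0, 0)) (some (0, 1)) (some (0, 2)) (matching S) := by
    intro i
    obtain rfl | rfl | rfl := ZMod.three_cases i <;> simp [starLeave]
  rcases a with _ | ⟨x, i⟩ <;> rcases b with _ | ⟨y, j⟩
  · exact absurd rfl hab
  · have hy : y ≠ 0 := by rintro rfl; exact hL (hstar j)
    exact exists_triple_infty hS hy j
  · have hx : x ≠ 0 := by rintro rfl; rw [pair_comm] at hL; exact hL (hstar i)
    rw [pair_comm]
    exact exists_triple_infty hS hx i
  · obtain rfl | rfl | rfl : j = i ∨ j = i + 1 ∨ i = j + 1 := by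
      clear hab hL; revert i j; decide
    · exact exists_triple_same_level hS (by rintro rfl; exact hab rfl) j
    · exact exists_triple_cross_level hS x y i fun h => hL (mem_union_left _ h)
    · rw [pair_comm]
      rw [pair_comm] at hL
      exact exists_triple_cross_level hS y x j fun h => hL (mem_union_left _ h)

theorem three_mul_card_triples_add_card (hS : IsHalfSystem S) :
    3 * Multiset.card (triples S) +
        #(starLeave none (some (0, 0)) (some (0, 1)) (some (0, 2)) (matching S)) =
      (Fintype.card (Point G)).choose 2 := by
  have hV : Fintype.card (Point G) = 3 * Fintype.card G + 1 := by simp [mul_comm]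
  have hG := hS.two_mul_card_add_one
  have hP := (isStarMatching hS).two_mul_card_add_four
  rw [hV, ← hG] at hP
  rw [(isStarMatching hS).card_starLeave, card_triples, hV, Nat.choose_two_right, ← hG]
  generalize #S = n at hP ⊢
  have hPn : #(matching S) = 3 * n := by omega
  rw [hPn]
  have : (3 * (2 * n + 1) + 1) * (3 * (2 * n + 1) + 1 - 1) = 2 * (18 * n ^ 2 + 21 * n + 6) := by
    rw [Nat.add_sub_cancel]; ring
  rw [this, Nat.mul_div_cancel_left _ two_pos]
  ring

theorem isPTSWithLeave (hS : IsHalfSystem S) :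
    IsPTSWithLeave (triples S)
      (starLeave none (some (0, 0)) (some (0, 1)) (some (0, 2)) (matching S)) :=
  isPTSWithLeave_of_forall_exists (card_eq_three_of_mem_triples hS)
    (isStarMatching hS).card_eq_two_of_mem_starLeave (three_mul_card_triples_add_card hS)
    (not_subset_of_mem_starLeave hS) (exists_triple_of_notMem_starLeave hS)

end PTSConstruction

theorem stmt_8_general (ν : ℕ) (hmod : ν % 6 = 4) :
    ∃ H : Multiset (Finset (Fin ν)),
      (∀ t ∈ H, t.card = 3) ∧
      (∀ x y : Fin ν, x ≠ y → codegPair H {x, y} ≤ 1) ∧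
      Multiset.card H = (ν.choose 2 - ν / 2 - 1) / 3 ∧
      ∃ w x y z : Fin ν,
        w ≠ x ∧ w ≠ y ∧ w ≠ z ∧ x ≠ y ∧ x ≠ z ∧ y ≠ z ∧
        ∃ P : Finset (Finset (Fin ν)),
          P.card = (ν - 4) / 2 ∧
          (∀ p ∈ P, p.card = 2) ∧
          (∀ p ∈ P, ∀ q ∈ P, p ≠ q → Disjoint p q) ∧
          (∀ p ∈ P, Disjoint p ({w, x, y, z} : Finset (Fin ν))) ∧
          (∀ v : Fin ν, v ∉ ({w, x, y, z} : Finset (Fin ν)) → ∃ p ∈ P, v ∈ p) ∧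
          (∀ p ∈ P ∪ {({w, x} : Finset (Fin ν)), {w, y}, {w, z}},
            codegPair H p = 0) ∧
          (∀ a b : Fin ν, a ≠ b →
            ({a, b} : Finset (Fin ν)) ∉ P ∪ {({w, x} : Finset (Fin ν)), {w, y}, {w, z}} →
            codegPair H {a, b} = 1) := by
  obtain ⟨t, rfl⟩ : ∃ t, ν = 6 * t + 4 := ⟨ν / 6, by omega⟩
  obtain ⟨S, hS⟩ := exists_isHalfSystem (G := ZMod (2 * t + 1)) (by simp)
  have hV : Fintype.card (PTSConstruction.Point (ZMod (2 * t + 1))) = 6 * t + 4 := by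
    simp; ring
  let e := Fintype.equivFinOfCardEq hV
  have hH := (PTSConstruction.isPTSWithLeave hS).map e
  have hM := (PTSConstruction.isStarMatching hS).map e
  rw [image_starLeave] at hH
  have hcount := hH.three_mul_card_add_card hM.card_eq_two_of_mem_starLeave
  have hP := hM.two_mul_card_add_four
  rw [hM.card_starLeave, Fintype.card_fin] at hcount
  rw [Fintype.card_fin] at hP
  obtain ⟨hwx, hwy, hwz, hxy, hxz, hyz⟩ := hM.distinct
  exact ⟨_, hH.card_eq_three, fun a b hab => hH.codegPair_le_one hab, by omega, _, _, _, _,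
    hwx, hwy, hwz, hxy, hxz, hyz, _, by omega, hM.card_eq_two, hM.disjoint, hM.disjoint_star,
    hM.cover, hH.codegPair_leave, hH.codegPair_pair⟩

/-- for `ν ≡ 4 (mod 6)` there is a `PTS(ν, 1)` with exactly
`(C(ν,2) − ν/2 − 1)/3` triples whose leave is `K_{1,3}` plus `(ν−4)/2` independent
edges. -/
theorem stmt_8 (ν : ℕ) (hpos : 0 < ν) (hmod : ν % 6 = 4) :
    ∃ H : Multiset (Finset (Fin ν)),
      (∀ t ∈ H, t.card = 3) ∧
      (∀ x y : Fin ν, x ≠ y → codegPair H {x, y} ≤ 1) ∧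
      Multiset.card H = (ν.choose 2 - ν / 2 - 1) / 3 ∧
      ∃ w x y z : Fin ν,
        w ≠ x ∧ w ≠ y ∧ w ≠ z ∧ x ≠ y ∧ x ≠ z ∧ y ≠ z ∧
        ∃ P : Finset (Finset (Fin ν)),
          P.card = (ν - 4) / 2 ∧
          (∀ p ∈ P, p.card = 2) ∧
          (∀ p ∈ P, ∀ q ∈ P, p ≠ q → Disjoint p q) ∧
          (∀ p ∈ P, Disjoint p ({w, x, y, z} : Finset (Fin ν))) ∧
          (∀ v : Fin ν, v ∉ ({w, x, y, z} : Finset (Fin ν)) → ∃ p ∈ P, v ∈ p) ∧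
          (∀ p ∈ P ∪ {({w, x} : Finset (Fin ν)), {w, y}, {w, z}},
            codegPair H p = 0) ∧
          (∀ a b : Fin ν, a ≠ b →
            ({a, b} : Finset (Fin ν)) ∉ P ∪ {({w, x} : Finset (Fin ν)), {w, y}, {w, z}} →
            codegPair H {a, b} = 1) :=
  stmt_8_general ν hmod
end
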